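/- arXiv:2111.13491 — 6 statements merged into one kernel-verified Lean document; each statement's English description precedes it below -/
import Mathlib

section
/- Fusion lemma for Silver trees: if (Tₙ) is a sequence of Silver trees with T_{n+1} ⊆ Tₙ and the defining strings satisfy uₖ(T_{n+1}) = uₖ(Tₙ) for all k ≤ n (i.e., T_{n+1} n+1-refines Tₙ), then T = ⋂ₙ Tₙ is a Silver tree, with uₙ(T) = uₙ(Tₙ) for all n. -/
open List

/-- Initial segment of length `n` of an infinite binary sequence. -/
def seqTake (a : ℕ → Bool) (n : ℕ) : List Bool := List.ofFn (fun i : Fin n => a i)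

/-- The shift `σ ∔ a` : flip bits of `a` at positions `i < |σ|` where `σ(i) = 1`
    (addition modulo 2), leave other positions unchanged. -/
def shiftSeq (σ : List Bool) (a : ℕ → Bool) : ℕ → Bool :=
  fun i => if i < σ.length then xor (σ.getD i false) (a i) else a i

/-- The shift `σ ∔ v` of a finite string `v`. -/
def shiftStr (σ v : List Bool) : List Bool :=
  seqTake (shiftSeq σ (fun i => v.getD i false)) v.length

/-- The equivalence relation `E₀`: the sequences differ in finitely many positions. -/
def E0 (a b : ℕ → Bool) : Prop := {k | a k ≠ b k}.Finite

/-- The set `[T]` of infinite branches of a tree `T ⊆ 2^{<ω}`. -/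
def branches (T : Set (List Bool)) : Set (ℕ → Bool) := {a | ∀ n, seqTake a n ∈ T}

/-- The portion `T↾u = {s ∈ T : u ⊆ s ∨ s ⊆ u}`. -/
def portion (T : Set (List Bool)) (u : List Bool) : Set (List Bool) :=
  {s ∈ T | u <+: s ∨ s <+: u}

/-- A nonempty tree closed under initial segments. -/
def IsTree (T : Set (List Bool)) : Prop :=
  T.Nonempty ∧ ∀ s ∈ T, ∀ t : List Bool, t <+: s → t ∈ T

/-- A perfect tree: a tree in which every node extends to a splitting node. -/
def IsPerfectTree (T : Set (List Bool)) : Prop :=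
  IsTree T ∧ ∀ s ∈ T, ∃ t ∈ T, s <+: t ∧ t ++ [false] ∈ T ∧ t ++ [true] ∈ T

/-- `u₀⌢i₀⌢u₁⌢i₁⌢…⌢uₙ⌢iₙ`. -/
def silverPrefix (u : ℕ → List Bool) (i : ℕ → Bool) : ℕ → List Bool
  | 0 => u 0 ++ [i 0]
  | n+1 => silverPrefix u i n ++ u (n+1) ++ [i (n+1)]

/-- The branch `u₀⌢i₀⌢u₁⌢i₁⌢…` of the Silver tree with strings `uₖ` and bits `iₖ`. -/
def silverBranch (u : ℕ → List Bool) (i : ℕ → Bool) : ℕ → Bool :=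
  fun m => (silverPrefix u i m).getD m false

/-- `T` is the Silver tree with defining strings `uₖ`: `T` consists exactly of all
    initial segments of the branches `u₀⌢i₀⌢u₁⌢i₁⌢…`. -/
def SilverTreeWith (u : ℕ → List Bool) (T : Set (List Bool)) : Prop :=
  T = {s | ∃ i : ℕ → Bool, s = seqTake (silverBranch u i) s.length}

def IsSilver (T : Set (List Bool)) : Prop := ∃ u, SilverTreeWith u T

/-- The splitting levels `hₙ = |u₀|+1+…+|u_{n-1}|+1+|uₙ|` of a Silver tree. -/
def hLevel (u : ℕ → List Bool) (n : ℕ) : ℕ :=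
  (∑ k ∈ Finset.range n, ((u k).length + 1)) + (u n).length

/-- `S` n-refines the Silver tree `T` (with strings `uT`): `S ⊆ T` and the first
    `n` defining strings agree. -/
def RefinesN (uT : ℕ → List Bool) (S T : Set (List Bool)) (n : ℕ) : Prop :=
  S ⊆ T ∧ ∃ uS, SilverTreeWith uS S ∧ ∀ k < n, uS k = uT k

/-- `S` is clopen in `T`: a finite union of portions of `T`. -/
def ClopenIn (S T : Set (List Bool)) : Prop :=
  ∃ F : Finset (List Bool), ↑F ⊆ T ∧ S = ⋃ u ∈ F, portion T u


lemma silverPrefix_congr (u v : ℕ → List Bool) (i : ℕ → Bool) :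
    ∀ p, (∀ k ≤ p, u k = v k) → silverPrefix u i p = silverPrefix v i p
  | 0, h => by simp [silverPrefix, h 0 le_rfl]
  | p+1, h => by
      simp only [silverPrefix,
        silverPrefix_congr u v i p (fun k hk => h k (hk.trans p.le_succ)),
        h (p+1) le_rfl]

lemma seqTake_silverBranch_congr (u v : ℕ → List Bool) (i : ℕ → Bool) (L : ℕ)
    (h : ∀ k < L, u k = v k) :
    seqTake (silverBranch u i) L = seqTake (silverBranch v i) L := by
  refine congrArg List.ofFn (funext fun p => ?_)
  unfold silverBranch
  rw [silverPrefix_congr u v i p (fun k hk => h k (lt_of_le_of_lt hk p.isLt))]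

theorem silver_fusion (T : ℕ → Set (List Bool)) (u : ℕ → ℕ → List Bool)
    (hT : ∀ n, SilverTreeWith (u n) (T n))
    (hsub : ∀ n, T (n+1) ⊆ T n)
    (href : ∀ n, ∀ k ≤ n, u (n+1) k = u n k) :
    SilverTreeWith (fun n => u n n) (⋂ n, T n) := by
  have ustab : ∀ m k, k ≤ m → u m k = u k k := by
    intro m
    induction m with
    | zero => intro k hk; rw [Nat.le_zero.mp hk]
    | succ m ih =>
        intro k hk
        rcases Nat.eq_or_lt_of_le hk with h | h
        · rw [h]
        · rw [href m k (Nat.lt_succ_iff.mp h), ih k (Nat.lt_succ_iff.mp h)]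
  have chain : ∀ n m, n ≤ m → T m ⊆ T n := by
    intro n m h
    induction h with
    | refl => exact subset_rfl
    | step h ih => exact fun x hx => (by exact ih (hsub _ hx))
  unfold SilverTreeWith
  ext s
  simp only [Set.mem_iInter, Set.mem_setOf_eq]
  constructor
  · intro hs
    have h1 := hs s.length
    rw [hT s.length] at h1
    obtain ⟨i, hi⟩ := h1
    exact ⟨i, hi.trans (seqTake_silverBranch_congr (u s.length) (fun k => u k k) i s.length
      (fun k hk => ustab s.length k hk.le))⟩
  · rintro ⟨i, hi⟩ n
    apply chain n (max n s.length) (le_max_left _ _)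
    rw [hT (max n s.length)]
    refine ⟨i, hi.trans (seqTake_silverBranch_congr (fun k => u k k) (u (max n s.length)) i s.length
      (fun k hk => (ustab _ k (hk.le.trans (le_max_right _ _))).symm))⟩
end

section
/- Every Borel function f : 2^ℕ → 2^ℕ is continuous on [S] for some Silver subtree S of any given Silver tree T; that is, for every Silver tree T and Borel f there is a Silver tree S ⊆ T such that f restricted to [S] is continuous. -/
open List

section Aux

open Set

lemma seqTake_length (a : ℕ → Bool) (n : ℕ) : (seqTake a n).length = n := by
  simp [seqTake]

lemma seqTake_getD (a : ℕ → Bool) {m n : ℕ} (h : m < n) :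
    (seqTake a n).getD m false = a m := by
  rw [List.getD_eq_getElem?_getD]
  simp [seqTake, h]

lemma seqTake_congr {a b : ℕ → Bool} {n : ℕ} (h : ∀ m < n, a m = b m) :
    seqTake a n = seqTake b n := by
  simp only [seqTake]
  congr 1
  funext m
  exact h m m.2

lemma seqTake_succ (a : ℕ → Bool) (n : ℕ) :
    seqTake a (n + 1) = seqTake a n ++ [a n] := by
  simp only [seqTake, List.ofFn_succ', List.concat_eq_append, Fin.coe_castSucc, Fin.val_last]

lemma seqTake_add (a : ℕ → Bool) (n m : ℕ) :
    seqTake a (n + m) = seqTake a n ++ List.ofFn (fun t : Fin m => a (n + t)) := by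
  induction m with
  | zero => simp
  | succ m ih =>
      rw [← Nat.add_assoc, seqTake_succ, ih, List.ofFn_succ']
      simp [List.append_assoc]

lemma hLevel_succ (u : ℕ → List Bool) (n : ℕ) :
    hLevel u (n + 1) = hLevel u n + 1 + (u (n + 1)).length := by
  simp [hLevel, Finset.sum_range_succ]
  omega

lemma hLevel_strictMono (u : ℕ → List Bool) : StrictMono (hLevel u) := by
  apply strictMono_nat_of_lt_succ
  intro n
  rw [hLevel_succ]
  omega

lemma self_le_hLevel (u : ℕ → List Bool) (n : ℕ) : n ≤ hLevel u n := by
  induction n with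
  | zero => exact Nat.zero_le _
  | succ n ih => rw [hLevel_succ]; omega

lemma silverPrefix_length (u : ℕ → List Bool) (i : ℕ → Bool) (n : ℕ) :
    (silverPrefix u i n).length = hLevel u n + 1 := by
  induction n with
  | zero => simp [silverPrefix, hLevel]
  | succ n ih => simp [silverPrefix, ih, hLevel_succ]; omega

lemma silverPrefix_congr_s13 {u u' : ℕ → List Bool} {i i' : ℕ → Bool} {n : ℕ}
    (hu : ∀ k ≤ n, u k = u' k) (hi : ∀ k ≤ n, i k = i' k) :
    silverPrefix u i n = silverPrefix u' i' n := by
  induction n with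
  | zero => simp [silverPrefix, hu 0 le_rfl, hi 0 le_rfl]
  | succ n ih =>
      simp only [silverPrefix]
      rw [ih (fun k hk => hu k (hk.trans n.le_succ)) (fun k hk => hi k (hk.trans n.le_succ)),
        hu (n+1) le_rfl, hi (n+1) le_rfl]

lemma silverPrefix_prefix (u : ℕ → List Bool) (i : ℕ → Bool) {m n : ℕ} (h : m ≤ n) :
    silverPrefix u i m <+: silverPrefix u i n := by
  induction n with
  | zero => rw [Nat.le_zero.mp h]
  | succ n ih =>
      rcases Nat.lt_or_ge m (n+1) with h'|h'
      · exact (ih (Nat.lt_succ_iff.mp h')).trans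
          ⟨u (n+1) ++ [i (n+1)], by simp [silverPrefix]⟩
      · rw [Nat.le_antisymm h h']

lemma prefix_getD_eq {l l' : List Bool} (h : l <+: l') {m : ℕ} (hm : m < l.length) :
    l'.getD m false = l.getD m false := by
  obtain ⟨t, rfl⟩ := h
  rw [List.getD_append _ _ _ _ hm]

lemma silverPrefix_getD_hLevel (u : ℕ → List Bool) (i : ℕ → Bool) {k n : ℕ} (h : k ≤ n) :
    (silverPrefix u i n).getD (hLevel u k) false = i k := by
  rw [prefix_getD_eq (silverPrefix_prefix u i h) (by rw [silverPrefix_length]; omega)]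
  cases k with
  | zero =>
      simp only [silverPrefix, hLevel, Finset.range_zero, Finset.sum_empty, Nat.zero_add]
      rw [List.getD_append_right _ _ _ _ le_rfl]
      simp
  | succ k =>
      have hl : (silverPrefix u i k ++ u (k+1)).length = hLevel u (k+1) := by
        simp [silverPrefix_length, hLevel_succ]
      show (silverPrefix u i k ++ u (k+1) ++ [i (k+1)]).getD (hLevel u (k+1)) false = i (k+1)
      rw [List.getD_append_right _ _ _ _ (by omega), hl]
      simp

lemma silverPrefix_getD_offSplit (u : ℕ → List Bool) (i i' : ℕ → Bool) {p n : ℕ}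
    (hp : p ≤ hLevel u n) (h : ∀ k, p ≠ hLevel u k) :
    (silverPrefix u i n).getD p false = (silverPrefix u i' n).getD p false := by
  induction n with
  | zero =>
      have hp' : p < (u 0).length := by
        have := h 0
        simp only [hLevel, Finset.range_zero, Finset.sum_empty, Nat.zero_add] at this hp
        omega
      show (u 0 ++ [i 0]).getD p false = (u 0 ++ [i' 0]).getD p false
      rw [List.getD_append _ _ _ _ hp', List.getD_append _ _ _ _ hp']
  | succ n ih =>
      show (silverPrefix u i n ++ u (n+1) ++ [i (n+1)]).getD p false
          = (silverPrefix u i' n ++ u (n+1) ++ [i' (n+1)]).getD p false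
      rcases Nat.lt_or_ge p (hLevel u n + 1) with h'|h'
      · calc (silverPrefix u i n ++ u (n+1) ++ [i (n+1)]).getD p false
            = (silverPrefix u i n).getD p false :=
              prefix_getD_eq ⟨u (n+1) ++ [i (n+1)], by simp [silverPrefix]⟩
                (by rw [silverPrefix_length]; omega)
          _ = (silverPrefix u i' n).getD p false := ih (by omega)
          _ = (silverPrefix u i' n ++ u (n+1) ++ [i' (n+1)]).getD p false :=
              (prefix_getD_eq ⟨u (n+1) ++ [i' (n+1)], by simp [silverPrefix]⟩
                (by rw [silverPrefix_length]; omega)).symm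
      · have hlen : (silverPrefix u i n ++ u (n+1)).length = hLevel u (n+1) := by
          simp [silverPrefix_length, hLevel_succ]
        have hlen' : (silverPrefix u i' n ++ u (n+1)).length = hLevel u (n+1) := by
          simp [silverPrefix_length, hLevel_succ]
        have hp2 : p < hLevel u (n+1) := lt_of_le_of_ne hp (h (n+1))
        rw [prefix_getD_eq (l := silverPrefix u i n ++ u (n+1)) ⟨[i (n+1)], rfl⟩ (by omega),
          prefix_getD_eq (l := silverPrefix u i' n ++ u (n+1)) ⟨[i' (n+1)], rfl⟩ (by omega)]
        rw [List.getD_append_right _ _ _ _ (by rw [silverPrefix_length]; omega),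
          List.getD_append_right _ _ _ _ (by rw [silverPrefix_length]; omega),
          silverPrefix_length, silverPrefix_length]

end Aux


section Aux2

open Set

lemma silverBranch_eq_getD (u : ℕ → List Bool) (i : ℕ → Bool) {p n : ℕ}
    (h : p ≤ hLevel u n) :
    silverBranch u i p = (silverPrefix u i n).getD p false := by
  rcases Nat.le_total p n with h'|h'
  · have h2 : (silverPrefix u i n).getD p false = (silverPrefix u i p).getD p false :=
      prefix_getD_eq (silverPrefix_prefix u i h')
        (by rw [silverPrefix_length]; exact Nat.lt_succ_of_le (self_le_hLevel u p))
    rw [h2]; rfl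
  · have h2 : (silverPrefix u i p).getD p false = (silverPrefix u i n).getD p false :=
      prefix_getD_eq (silverPrefix_prefix u i h')
        (by rw [silverPrefix_length]; omega)
    rw [← h2]; rfl

lemma silverBranch_hLevel (u : ℕ → List Bool) (i : ℕ → Bool) (k : ℕ) :
    silverBranch u i (hLevel u k) = i k := by
  rw [silverBranch_eq_getD u i (le_refl (hLevel u k) : _ ≤ hLevel u k)]
  · exact silverPrefix_getD_hLevel u i le_rfl

lemma silverBranch_offSplit {u : ℕ → List Bool} (i i' : ℕ → Bool) {p : ℕ}
    (h : ∀ k, p ≠ hLevel u k) :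
    silverBranch u i p = silverBranch u i' p := by
  rw [silverBranch_eq_getD u i (self_le_hLevel u p),
    silverBranch_eq_getD u i' (self_le_hLevel u p)]
  exact silverPrefix_getD_offSplit u i i' (self_le_hLevel u p) h

lemma silverBranch_congr {u : ℕ → List Bool} {i i' : ℕ → Bool} {p : ℕ}
    (h : ∀ k ≤ p, i k = i' k) :
    silverBranch u i p = silverBranch u i' p := by
  unfold silverBranch
  rw [silverPrefix_congr_s13 (fun k _ => rfl) h]

lemma seqTake_silverBranch (u : ℕ → List Bool) (i : ℕ → Bool) (n : ℕ) :
    seqTake (silverBranch u i) (hLevel u n + 1) = silverPrefix u i n := by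
  have hlen : (seqTake (silverBranch u i) (hLevel u n + 1)).length
      = (silverPrefix u i n).length := by
    rw [seqTake_length, silverPrefix_length]
  apply List.ext_getElem hlen
  intro p h1 h2
  rw [← List.getD_eq_getElem _ false, ← List.getD_eq_getElem _ false]
  rw [seqTake_length] at h1
  rw [seqTake_getD _ h1]
  exact silverBranch_eq_getD u i (by omega)

lemma silverBranch_mem (u : ℕ → List Bool) {T : Set (List Bool)}
    (hT : SilverTreeWith u T) (i : ℕ → Bool) (n : ℕ) :
    seqTake (silverBranch u i) n ∈ T := by
  rw [hT]
  exact ⟨i, by rw [seqTake_length]⟩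

lemma branches_eq_silverBranch {u : ℕ → List Bool} {T : Set (List Bool)}
    (hT : SilverTreeWith u T) {a : ℕ → Bool} (ha : a ∈ branches T) :
    a = silverBranch u (fun k => a (hLevel u k)) := by
  funext p
  have hN := ha (hLevel u p + 1)
  rw [hT] at hN
  obtain ⟨iN, hiN⟩ := hN
  rw [seqTake_length] at hiN
  have hpt : ∀ m < hLevel u p + 1, a m = silverBranch u iN m := by
    intro m hm
    have h3 := congrArg (fun l => l.getD m false) hiN
    rwa [seqTake_getD _ hm, seqTake_getD _ hm] at h3
  have hap : a p = silverBranch u iN p := hpt p (Nat.lt_succ_of_le (self_le_hLevel u p))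
  rw [hap]
  apply silverBranch_congr
  intro k hk
  have hk' : hLevel u k ≤ hLevel u p := (hLevel_strictMono u).le_iff_le.mpr hk
  rw [hpt (hLevel u k) (by omega), silverBranch_hLevel]

/-- Strings carved from a branch `a` at positions `q`. -/
def sliceStr (a : ℕ → Bool) (q : ℕ → ℕ) : ℕ → List Bool
  | 0 => seqTake a (q 0)
  | n+1 => List.ofFn (fun t : Fin (q (n+1) - q n - 1) => a (q n + 1 + t))

lemma hLevel_sliceStr {q : ℕ → ℕ} (hq : StrictMono q) (a : ℕ → Bool) (n : ℕ) :
    hLevel (sliceStr a q) n = q n := by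
  induction n with
  | zero => simp [hLevel, sliceStr, seqTake_length]
  | succ n ih =>
      have := hq (by omega : n < n + 1)
      rw [hLevel_succ, ih]
      simp only [sliceStr, List.length_ofFn]
      omega

lemma silverPrefix_sliceStr {q : ℕ → ℕ} (hq : StrictMono q) (a : ℕ → Bool) (n : ℕ) :
    silverPrefix (sliceStr a q) (fun m => a (q m)) n = seqTake a (q n + 1) := by
  induction n with
  | zero =>
      show seqTake a (q 0) ++ [a (q 0)] = seqTake a (q 0 + 1)
      rw [seqTake_succ]
  | succ n ih =>
      have hlt := hq (by omega : n < n + 1)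
      show silverPrefix (sliceStr a q) (fun m => a (q m)) n
          ++ List.ofFn (fun t : Fin (q (n+1) - q n - 1) => a (q n + 1 + t))
          ++ [a (q (n+1))] = seqTake a (q (n+1) + 1)
      rw [ih]
      have h1 : seqTake a (q n + 1) ++ List.ofFn (fun t : Fin (q (n+1) - q n - 1) => a (q n + 1 + t))
          = seqTake a (q (n+1)) := by
        rw [← seqTake_add a (q n + 1) (q (n+1) - q n - 1)]
        congr 1
        omega
      rw [h1, ← seqTake_succ]

lemma silverBranch_sliceStr {q : ℕ → ℕ} (hq : StrictMono q) (a : ℕ → Bool) :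
    silverBranch (sliceStr a q) (fun m => a (q m)) = a := by
  funext p
  have hple : p ≤ q p := hq.le_apply
  rw [silverBranch_eq_getD _ _ (n := p) (by rw [hLevel_sliceStr hq]; exact hple),
    silverPrefix_sliceStr hq]
  exact seqTake_getD a (by omega)

/-- Composition of Silver systems. -/
lemma silver_compose (uT w : ℕ → List Bool) :
    ∃ uS : ℕ → List Bool,
      ∀ j : ℕ → Bool, silverBranch uS j = silverBranch uT (silverBranch w j) := by
  classical
  set q : ℕ → ℕ := fun n => hLevel uT (hLevel w n) with hqdef
  have hq : StrictMono q := (hLevel_strictMono uT).comp (hLevel_strictMono w)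
  set β : ℕ → Bool := silverBranch uT (silverBranch w (fun _ => false)) with hβ
  refine ⟨sliceStr β q, fun j => ?_⟩
  have hβq : ∀ n, β (q n) = false := by
    intro n
    rw [hβ, hqdef]
    show silverBranch uT (silverBranch w (fun _ => false)) (hLevel uT (hLevel w n)) = false
    rw [silverBranch_hLevel, silverBranch_hLevel]
  have hβrec : silverBranch (sliceStr β q) (fun _ => false) = β := by
    have hfun : (fun m => β (q m)) = (fun _ : ℕ => false) := funext hβq
    have h5 := silverBranch_sliceStr hq β
    rwa [hfun] at h5
  funext p
  by_cases hsp : ∃ n, p = q n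
  · obtain ⟨n, rfl⟩ := hsp
    have h6 : q n = hLevel (sliceStr β q) n := (hLevel_sliceStr hq β n).symm
    rw [h6, silverBranch_hLevel, ← h6]
    show j n = silverBranch uT (silverBranch w j) (hLevel uT (hLevel w n))
    rw [silverBranch_hLevel, silverBranch_hLevel]
  · push_neg at hsp
    have hLS : silverBranch (sliceStr β q) j p = β p := by
      rw [silverBranch_offSplit j (fun _ : ℕ => false)
        (fun k => by rw [hLevel_sliceStr hq]; exact hsp k), hβrec]
    rw [hLS, hβ]
    by_cases hTs : ∃ m, p = hLevel uT m
    · obtain ⟨m, rfl⟩ := hTs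
      rw [silverBranch_hLevel, silverBranch_hLevel]
      exact silverBranch_offSplit _ _ (fun n hn => hsp n (by rw [hn]))
    · push_neg at hTs
      exact silverBranch_offSplit _ _ hTs

end Aux2


section Aux3

open Set Filter

lemma seqTake_eq_iff {a b : ℕ → Bool} {n : ℕ} :
    seqTake a n = seqTake b n ↔ ∀ m < n, a m = b m := by
  constructor
  · intro h m hm
    have h3 := congrArg (fun l => l.getD m false) h
    rwa [seqTake_getD _ hm, seqTake_getD _ hm] at h3
  · exact seqTake_congr

/-- The basic clopen cylinder determined by a finite string. -/
def cyl (v : List Bool) : Set (ℕ → Bool) := {x | seqTake x v.length = v}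

lemma mem_cyl_iff {v : List Bool} {x : ℕ → Bool} :
    x ∈ cyl v ↔ ∀ m < v.length, x m = v.getD m false := by
  constructor
  · intro h m hm
    rw [← seqTake_getD x (n := v.length) hm, h]
  · intro h
    show seqTake x v.length = v
    apply List.ext_getElem (by rw [seqTake_length])
    intro m h1 h2
    rw [← List.getD_eq_getElem _ false, ← List.getD_eq_getElem _ false,
      seqTake_getD _ (by rwa [seqTake_length] at h1)]
    exact h m (by rwa [seqTake_length] at h1)

lemma cyl_isOpen (v : List Bool) : IsOpen (cyl v) := by
  have : cyl v = ⋂ m : Fin v.length, {x : ℕ → Bool | x m = v.getD m false} := by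
    ext x
    simp only [mem_cyl_iff, mem_iInter, mem_setOf_eq]
    exact ⟨fun h m => h m m.2, fun h m hm => h ⟨m, hm⟩⟩
  rw [this]
  refine isOpen_iInter_of_finite fun m => ?_
  have h5 : IsOpen ((fun x : ℕ → Bool => x (↑m : ℕ)) ⁻¹' {v.getD (↑m : ℕ) false}) :=
    IsOpen.preimage (continuous_apply ((m : ℕ))) (isOpen_discrete _)
  exact h5

lemma mem_cyl_seqTake (x : ℕ → Bool) (n : ℕ) : x ∈ cyl (seqTake x n) := by
  show seqTake x (seqTake x n).length = seqTake x n
  rw [seqTake_length]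

lemma cyl_append_subset (v t : List Bool) : cyl (v ++ t) ⊆ cyl v := by
  intro x hx
  rw [mem_cyl_iff] at hx ⊢
  intro m hm
  rw [hx m (by rw [List.length_append]; omega), List.getD_append _ _ _ _ hm]

lemma cyl_seqTake_subset (x : ℕ → Bool) {n n' : ℕ} (h : n ≤ n') :
    cyl (seqTake x n') ⊆ cyl (seqTake x n) := by
  have : seqTake x n' = seqTake x n ++ List.ofFn (fun t : Fin (n' - n) => x (n + t)) := by
    rw [← seqTake_add]
    congr 1
    omega
  rw [this]
  exact cyl_append_subset _ _

lemma exists_cyl_subset {U : Set (ℕ → Bool)} (hO : IsOpen U) {x : ℕ → Bool} (hx : x ∈ U) :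
    ∃ n, cyl (seqTake x n) ⊆ U := by
  have hU : U ∈ nhds x := hO.mem_nhds hx
  rw [nhds_pi, Filter.mem_pi] at hU
  obtain ⟨I, hIfin, t, ht, hsub⟩ := hU
  obtain ⟨N, hN⟩ := hIfin.bddAbove
  refine ⟨N + 1, fun y hy => ?_⟩
  simp only [cyl, mem_setOf_eq, seqTake_length] at hy
  apply hsub
  intro i hi
  have hyx : y i = x i := by
    have : ∀ m < N + 1, y m = x m := seqTake_eq_iff.mp hy
    exact this i (by have := hN hi; omega)
  rw [hyx]
  exact mem_nhds_discrete.mp (ht i)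

lemma exists_tail_cyl_subset {D : Set (ℕ → Bool)} (hO : IsOpen D) (hd : Dense D)
    (s : List Bool) : ∃ t : List Bool, cyl (s ++ t) ⊆ D := by
  have hne : (cyl s).Nonempty := by
    refine ⟨fun m => s.getD m false, ?_⟩
    rw [mem_cyl_iff]
    intro m _; rfl
  obtain ⟨x, hxc, hxD⟩ := hd.inter_open_nonempty (cyl s) (cyl_isOpen s) hne
  obtain ⟨n, hn⟩ := exists_cyl_subset hO hxD
  set N := max n s.length with hNdef
  refine ⟨List.ofFn (fun k : Fin (N - s.length) => x (s.length + k)), ?_⟩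
  have hx2 : seqTake x s.length = s := by
    have := hxc
    simpa only [cyl, mem_setOf_eq, seqTake_length] using this
  have hfull : s ++ List.ofFn (fun k : Fin (N - s.length) => x (s.length + k))
      = seqTake x N := by
    have h4 : seqTake x N
        = seqTake x s.length ++ List.ofFn (fun k : Fin (N - s.length) => x (s.length + k)) := by
      rw [← seqTake_add]
      congr 1
      have : s.length ≤ N := le_max_right _ _
      omega
    rw [h4, hx2]
  rw [hfull]
  exact (cyl_seqTake_subset x (le_max_left n s.length)).trans hn

lemma exists_common_tail {D : Set (ℕ → Bool)} (hO : IsOpen D) (hd : Dense D)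
    (ps : List (List Bool)) : ∃ t : List Bool, ∀ p ∈ ps, cyl (p ++ t) ⊆ D := by
  induction ps with
  | nil => exact ⟨[], by simp⟩
  | cons p ps ih =>
      obtain ⟨t, ht⟩ := ih
      obtain ⟨t', ht'⟩ := exists_tail_cyl_subset hO hd (p ++ t)
      refine ⟨t ++ t', fun q hq => ?_⟩
      rcases List.mem_cons.mp hq with rfl|hq'
      · rw [← List.append_assoc]
        exact ht'
      · rw [← List.append_assoc]
        exact (cyl_append_subset (q ++ t) t').trans (ht q hq')

/-- The prefix of a Silver tree before the `n`-th string. -/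
def preS (w : ℕ → List Bool) (j : ℕ → Bool) : ℕ → List Bool
  | 0 => []
  | n+1 => silverPrefix w j n

lemma silverPrefix_eq_preS (w : ℕ → List Bool) (j : ℕ → Bool) (n : ℕ) :
    silverPrefix w j n = preS w j n ++ w n ++ [j n] := by
  cases n with
  | zero => simp [silverPrefix, preS]
  | succ n => rfl

lemma preS_congr {w w' : ℕ → List Bool} {j j' : ℕ → Bool} {n : ℕ}
    (hw : ∀ k < n, w k = w' k) (hj : ∀ k < n, j k = j' k) :
    preS w j n = preS w' j' n := by
  cases n with
  | zero => rfl
  | succ n =>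
      exact silverPrefix_congr_s13 (fun k hk => hw k (by omega)) (fun k hk => hj k (by omega))

/-- Extension of a finite bit pattern. -/
def extFin (n : ℕ) (σ : Fin n → Bool) : ℕ → Bool := fun k => if h : k < n then σ ⟨k, h⟩ else false

lemma exists_silver_in_residual {G : Set (ℕ → Bool)} (hG : G ∈ residual (ℕ → Bool)) :
    ∃ w : ℕ → List Bool, ∀ j, silverBranch w j ∈ G := by
  classical
  rw [mem_residual_iff] at hG
  obtain ⟨S, hSo, hSd, hSc, hSsub⟩ := hG
  obtain ⟨D, hD, hDsub⟩ : ∃ D : ℕ → Set (ℕ → Bool),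
      (∀ n, IsOpen (D n) ∧ Dense (D n)) ∧ (⋂ n, D n) ⊆ G := by
    rcases S.eq_empty_or_nonempty with rfl|hne
    · exact ⟨fun _ => univ, fun n => ⟨isOpen_univ, dense_univ⟩,
        by simpa using hSsub⟩
    · obtain ⟨e, he⟩ := hSc.exists_eq_range hne
      refine ⟨e, fun n => ?_, ?_⟩
      · have : e n ∈ S := he ▸ mem_range_self n
        exact ⟨hSo _ this, hSd _ this⟩
      · rw [← sInter_range, ← he]
        exact hSsub
  have key : ∀ (n : ℕ) (prev : ℕ → List Bool), ∃ t : List Bool,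
      ∀ j : ℕ → Bool, cyl (preS prev j n ++ t) ⊆ D n := by
    intro n prev
    obtain ⟨t, ht⟩ := exists_common_tail (hD n).1 (hD n).2
      (((Finset.univ : Finset (Fin n → Bool)).toList).map (fun σ => preS prev (extFin n σ) n))
    refine ⟨t, fun j => ?_⟩
    have hpre : preS prev j n = preS prev (extFin n (fun k : Fin n => j k)) n :=
      preS_congr (fun _ _ => rfl) (fun k hk => by simp [extFin, hk])
    rw [hpre]
    exact ht _ (List.mem_map.mpr ⟨_, Finset.mem_toList.mpr (Finset.mem_univ _), rfl⟩)
  choose pick hpick using key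
  set g : ℕ → List (List Bool) :=
    fun n => Nat.rec [] (fun m prev => prev ++ [pick m (fun k => prev.getD k [])]) n with hg
  set w : ℕ → List Bool := fun n => pick n (fun k => (g n).getD k []) with hw
  have hgofn : ∀ n, g n = List.ofFn (fun k : Fin n => w k) := by
    intro n
    induction n with
    | zero => rfl
    | succ n ih =>
        show g n ++ [w n] = _
        rw [ih, List.ofFn_succ' (fun k : Fin (n+1) => w k), List.concat_eq_append]
        simp [Fin.coe_castSucc, Fin.val_last]
  have hgd : ∀ n, ∀ k < n, (g n).getD k [] = w k := by
    intro n k hk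
    rw [hgofn n, List.getD_eq_getElem _ _ (by rw [List.length_ofFn]; exact hk)]
    simp
  have hW : ∀ (n : ℕ) (j : ℕ → Bool), cyl (preS w j n ++ w n) ⊆ D n := by
    intro n j
    have : preS w j n = preS (fun k => (g n).getD k []) j n :=
      preS_congr (fun k hk => (hgd n k hk).symm) (fun _ _ => rfl)
    rw [this]
    exact hpick n _ j
  refine ⟨w, fun j => hDsub ?_⟩
  rw [mem_iInter]
  intro n
  apply hW n j
  have h1 : silverBranch w j ∈ cyl (silverPrefix w j n) := by
    show seqTake (silverBranch w j) (silverPrefix w j n).length = silverPrefix w j n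
    rw [silverPrefix_length]
    exact seqTake_silverBranch w j n
  have h2 : cyl (silverPrefix w j n) ⊆ cyl (preS w j n ++ w n) := by
    rw [silverPrefix_eq_preS w j n]
    exact cyl_append_subset _ _
  exact h2 h1

end Aux3


section Aux4

open Set Filter Topology TopologicalSpace

lemma measurable_continuousOn_residual {F : (ℕ → Bool) → (ℕ → Bool)} (hF : Measurable F) :
    ∃ G ∈ residual (ℕ → Bool), ContinuousOn F G := by
  classical
  obtain ⟨B, hBc, -, hB⟩ := exists_countable_basis (ℕ → Bool)
  have key : ∀ V ∈ B, ∃ U : Set (ℕ → Bool), IsOpen U ∧ (F ⁻¹' V) =ᵇ U := fun V hV =>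
    ((hF (hB.isOpen hV).measurableSet).baireMeasurableSet).residualEq_isOpen
  choose! U hUo hUeq using key
  set G := ⋂ V ∈ B, {x | x ∈ F ⁻¹' V ↔ x ∈ U V} with hG
  have hGres : G ∈ residual (ℕ → Bool) := by
    rw [hG]
    apply (countable_bInter_mem hBc).mpr
    intro V hV
    exact Filter.Eventually.mono (hUeq V hV) fun x hx => iff_of_eq hx
  refine ⟨G, hGres, fun x hx => ?_⟩
  rw [ContinuousWithinAt, Filter.tendsto_def]
  intro V hV
  obtain ⟨W, hWB, hFxW, hWV⟩ := hB.mem_nhds_iff.mp hV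
  refine mem_nhdsWithin.mpr ⟨U W, hUo W hWB, ?_, ?_⟩
  · exact (mem_iInter₂.mp hx W hWB).mp hFxW
  · rintro y ⟨hyU, hyG⟩
    exact hWV ((mem_iInter₂.mp hyG W hWB).mpr hyU)

lemma continuous_silverBranch (u : ℕ → List Bool) :
    Continuous (fun i : ℕ → Bool => silverBranch u i) := by
  apply continuous_pi
  intro m
  have hfact : (fun i : ℕ → Bool => silverBranch u i m)
      = (fun σ : Fin (m+1) → Bool => silverBranch u (extFin (m+1) σ) m)
        ∘ (fun (i : ℕ → Bool) (k : Fin (m+1)) => i (k : ℕ)) := by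
    funext i
    exact silverBranch_congr fun k hk => by simp [extFin, Nat.lt_succ_of_le hk]
  rw [hfact]
  exact Continuous.comp continuous_of_discreteTopology
    (continuous_pi fun k => continuous_apply _)

end Aux4

theorem borel_continuous_on_silver (T : Set (List Bool)) (hT : IsSilver T)
    (f : (ℕ → Bool) → (ℕ → Bool)) (hf : Measurable f) :
    ∃ S : Set (List Bool), IsSilver S ∧ S ⊆ T ∧ ContinuousOn f (branches S) := by
  classical
  obtain ⟨uT, hTu⟩ := hT
  set Φ : (ℕ → Bool) → (ℕ → Bool) := fun i => silverBranch uT i with hΦ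
  have hΦc : Continuous Φ := continuous_silverBranch uT
  have hFmeas : Measurable (f ∘ Φ) := hf.comp hΦc.measurable
  obtain ⟨G, hGres, hGcont⟩ := measurable_continuousOn_residual hFmeas
  obtain ⟨w, hwG⟩ := exists_silver_in_residual hGres
  obtain ⟨uS, huS⟩ := silver_compose uT w
  set S : Set (List Bool) := {s | ∃ j : ℕ → Bool, s = seqTake (silverBranch uS j) s.length}
    with hSdef
  have hSsilver : SilverTreeWith uS S := hSdef
  refine ⟨S, ⟨uS, hSsilver⟩, ?_, ?_⟩
  · rintro s ⟨j, hs⟩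
    rw [hTu]
    exact ⟨silverBranch w j, by rw [← huS j]; exact hs⟩
  · set Ψ : (ℕ → Bool) → (ℕ → Bool) := fun a k => a (hLevel uT k) with hΨ
    have hΨc : Continuous Ψ := continuous_pi fun k => continuous_apply _
    have hcode : ∀ a ∈ branches S,
        Ψ a = silverBranch w (fun k => a (hLevel uS k))
          ∧ a = Φ (silverBranch w (fun k => a (hLevel uS k))) := by
      intro a ha
      have h1 : a = silverBranch uS (fun k => a (hLevel uS k)) :=
        branches_eq_silverBranch hSsilver ha
      have h2 : a = Φ (silverBranch w (fun k => a (hLevel uS k))) := by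
        rw [hΦ]
        show a = silverBranch uT (silverBranch w (fun k => a (hLevel uS k)))
        rw [← huS (fun k => a (hLevel uS k))]
        exact h1
      refine ⟨?_, h2⟩
      funext k
      show a (hLevel uT k) = silverBranch w (fun k => a (hLevel uS k)) k
      conv_lhs => rw [h2]
      exact silverBranch_hLevel uT _ k
    have hmaps : Set.MapsTo Ψ (branches S) G := fun a ha => by
      rw [(hcode a ha).1]; exact hwG _
    have hcomp : ContinuousOn ((f ∘ Φ) ∘ Ψ) (branches S) :=
      ContinuousOn.comp hGcont hΨc.continuousOn hmaps
    apply hcomp.congr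
    intro a ha
    obtain ⟨hc1, hc2⟩ := hcode a ha
    show f a = f (Φ (Ψ a))
    rw [hc1, ← hc2]
end

section
/- Let T be a Silver tree and f : 2^ℕ × ℕ^ℕ → 2^ℕ a Borel map. Then there is a Silver tree S ⊆ T and a dense Gδ set D ⊆ ℕ^ℕ such that f is continuous on [S] × D. -/
open List

/-!
Write the branches of `T` as `silverBranch v i`, `i ∈ 2^ℕ`; this map is a topological embedding
of `2^ℕ` onto `[T]`. The Borel map `g (i, x) = f (silverBranch v i, x)` has the Baire property,
so it is continuous on a comeagre set `C ⊆ 2^ℕ × ℕ^ℕ` (make the preimages of a countable basis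
agree with open sets off a meagre set). A fusion argument yields Silver strings `w` and a dense
`Gδ` set `D` with `[w] × D ⊆ C`: stage `t` takes care of one pair (dense open set, basic open
set of `ℕ^ℕ`), choosing a block `w t` that works simultaneously for all possible heads
`u₀⌢i₀⌢…⌢u_{t-1}⌢i_{t-1}` and shrinking the basic open set accordingly. The Silver tree `S`
whose branches are `silverBranch v (silverBranch w i)` lies in `T`, and `f` is continuous on
`[S] × D` because `silverBranch v` is an embedding.
-/

open Set Filter Topology

theorem Measurable.exists_mem_residual_continuousOn {X Y : Type*} [TopologicalSpace X]
    [MeasurableSpace X] [BorelSpace X] [TopologicalSpace Y] [MeasurableSpace Y]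
    [OpensMeasurableSpace Y] [SecondCountableTopology Y] {f : X → Y} (hf : Measurable f) :
    ∃ C ∈ residual X, ContinuousOn f C := by
  have hb := TopologicalSpace.isBasis_countableBasis Y
  have : Countable (TopologicalSpace.countableBasis Y) :=
    (TopologicalSpace.countable_countableBasis Y).to_subtype
  choose U hUo hU using fun b : TopologicalSpace.countableBasis Y =>
    (hf (hb.isOpen b.2).measurableSet).residualEq_isOpen
  refine ⟨{x | ∀ b : TopologicalSpace.countableBasis Y, x ∈ f ⁻¹' b ↔ x ∈ U b},
    eventually_countable_forall.mpr fun b => eventuallyEq_set.mp (hU b), ?_⟩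
  refine continuousOn_iff.mpr fun x hx t ht hxt => ?_
  obtain ⟨b, hb, hxb, hbt⟩ := hb.exists_subset_of_mem_open hxt ht
  exact ⟨U ⟨b, hb⟩, hUo _, (hx ⟨b, hb⟩).mp hxb, fun z hz => hbt ((hz.2 ⟨b, hb⟩).mpr hz.1)⟩

theorem exists_seq_isOpen_dense_iInter_subset {X : Type*} [TopologicalSpace X] {C : Set X}
    (hC : C ∈ residual X) :
    ∃ G : ℕ → Set X, (∀ n, IsOpen (G n)) ∧ (∀ n, Dense (G n)) ∧ ⋂ n, G n ⊆ C := by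
  obtain ⟨S, hSo, hSd, hSc, hSC⟩ := mem_residual_iff.mp hC
  obtain ⟨G, hG⟩ := (hSc.insert univ).exists_eq_range (insert_nonempty _ _)
  have hGS : ∀ n, G n ∈ insert univ S := fun n => hG ▸ mem_range_self n
  refine ⟨G, fun n => ?_, fun n => ?_, fun x hx => hSC fun s hs => ?_⟩
  · rcases hGS n with h | h
    · exact h ▸ isOpen_univ
    · exact hSo _ h
  · rcases hGS n with h | h
    · exact h ▸ dense_univ
    · exact hSd _ h
  · obtain ⟨n, rfl⟩ : s ∈ range G := hG ▸ mem_insert_of_mem _ hs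
    exact mem_iInter.mp hx n

namespace Silver

def cylinder (s : List Bool) : Set (ℕ → Bool) := {a | seqTake a s.length = s}

def blockCylinder (L : ℕ) (w : List Bool) : Set (ℕ → Bool) :=
  (fun a j => a (L + j)) ⁻¹' cylinder w

theorem length_seqTake (a : ℕ → Bool) (n : ℕ) : (seqTake a n).length = n :=
  List.length_ofFn

theorem getElem_seqTake (a : ℕ → Bool) {n m : ℕ} (hm : m < (seqTake a n).length) :
    (seqTake a n)[m] = a m :=
  List.getElem_ofFn hm

theorem seqTake_add (a : ℕ → Bool) (m n : ℕ) :
    seqTake a (m + n) = seqTake a m ++ seqTake (fun j => a (m + j)) n := by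
  simp [seqTake, List.ofFn_add]

theorem mem_cylinder_seqTake (a : ℕ → Bool) (n : ℕ) : a ∈ cylinder (seqTake a n) := by
  simp [cylinder, length_seqTake]

theorem mem_cylinder_iff {a : ℕ → Bool} {s : List Bool} :
    a ∈ cylinder s ↔ ∀ m (hm : m < s.length), a m = s[m] := by
  refine ⟨fun h m hm => ?_, fun h => List.ext_getElem (length_seqTake _ _) fun m h₁ h₂ => ?_⟩
  · rw [← getElem_seqTake a (by rwa [length_seqTake]), ← List.getElem_of_eq h]
  · rw [getElem_seqTake, h]

theorem mem_blockCylinder_iff {a : ℕ → Bool} {L : ℕ} {w : List Bool} :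
    a ∈ blockCylinder L w ↔ ∀ j (hj : j < w.length), a (L + j) = w[j] :=
  mem_cylinder_iff

theorem mem_cylinder_append {a : ℕ → Bool} {s t : List Bool} :
    a ∈ cylinder (s ++ t) ↔ a ∈ cylinder s ∧ (fun j => a (s.length + j)) ∈ cylinder t := by
  simp only [cylinder, mem_ofPred_eq, List.length_append, seqTake_add]
  exact ⟨fun h => List.append_inj h (length_seqTake _ _), fun h => by rw [h.1, h.2]⟩

theorem cylinder_anti {s t : List Bool} (h : s <+: t) : cylinder t ⊆ cylinder s := by
  obtain ⟨r, rfl⟩ := h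
  exact fun a ha => (mem_cylinder_append.mp ha).1

theorem prefix_seqTake_of_mem_cylinder {a : ℕ → Bool} {s : List Bool} (ha : a ∈ cylinder s)
    {n : ℕ} (hn : s.length ≤ n) : s <+: seqTake a n := by
  obtain ⟨k, rfl⟩ := Nat.exists_eq_add_of_le hn
  rw [seqTake_add, ha]
  exact List.prefix_append _ _

theorem cylinder_nonempty (s : List Bool) : (cylinder s).Nonempty :=
  ⟨fun m => s.getD m false, mem_cylinder_iff.mpr fun _ hm => List.getD_eq_getElem _ _ hm⟩

theorem isOpen_cylinder (s : List Bool) : IsOpen (cylinder s) := by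
  have : Continuous fun (a : ℕ → Bool) (i : Fin s.length) => a i := by fun_prop
  exact this.isOpen_preimage {f | List.ofFn f = s} (isOpen_discrete _)

theorem cylinder_seqTake (a : ℕ → Bool) (n : ℕ) : cylinder (seqTake a n) = PiNat.cylinder a n := by
  ext b
  simp [mem_cylinder_iff, length_seqTake, getElem_seqTake]

theorem exists_cylinder_subset {a : ℕ → Bool} {U : Set (ℕ → Bool)} (hU : U ∈ 𝓝 a) :
    ∃ n, cylinder (seqTake a n) ⊆ U := by
  obtain ⟨_, ⟨b, n, rfl⟩, hab, hbU⟩ := (PiNat.isTopologicalBasis_cylinders _).mem_nhds_iff.mp hU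
  exact ⟨n, by rwa [cylinder_seqTake, PiNat.mem_cylinder_iff_eq.mp hab]⟩

def silverTree (u : ℕ → List Bool) : Set (List Bool) :=
  {s | ∃ i : ℕ → Bool, s = seqTake (silverBranch u i) s.length}

/-- The position at which `u t` starts in every branch `u₀⌢i₀⌢u₁⌢i₁⌢…`. -/
def blockStart (u : ℕ → List Bool) (t : ℕ) : ℕ :=
  ∑ k ∈ Finset.range t, ((u k).length + 1)

section Branches

variable {u : ℕ → List Bool}

theorem hLevel_eq_blockStart_add (u : ℕ → List Bool) (t : ℕ) :
    hLevel u t = blockStart u t + (u t).length := rfl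

theorem blockStart_succ (u : ℕ → List Bool) (t : ℕ) :
    blockStart u (t + 1) = hLevel u t + 1 := by
  simp only [blockStart, hLevel_eq_blockStart_add, Finset.sum_range_succ]
  omega

theorem hLevel_strictMono (u : ℕ → List Bool) : StrictMono (hLevel u) :=
  strictMono_nat_of_lt_succ fun t => by
    rw [hLevel_eq_blockStart_add u (t + 1), blockStart_succ]; omega

theorem length_silverPrefix (u : ℕ → List Bool) (i : ℕ → Bool) (t : ℕ) :
    (silverPrefix u i t).length = hLevel u t + 1 := by
  induction t with
  | zero => simp [silverPrefix, hLevel_eq_blockStart_add, blockStart]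
  | succ t ih =>
    simp only [silverPrefix, List.length_append, ih, hLevel_eq_blockStart_add u (t + 1),
      blockStart_succ, List.length_singleton]

theorem silverPrefix_prefix (u : ℕ → List Bool) (i : ℕ → Bool) {s t : ℕ} (h : s ≤ t) :
    silverPrefix u i s <+: silverPrefix u i t := by
  induction t, h using Nat.le_induction with
  | base => exact List.prefix_rfl
  | succ t _ ih => exact ih.trans ⟨u (t + 1) ++ [i (t + 1)], by simp [silverPrefix]⟩

theorem silverBranch_mem_cylinder (u : ℕ → List Bool) (i : ℕ → Bool) (t : ℕ) :
    silverBranch u i ∈ cylinder (silverPrefix u i t) := by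
  refine mem_cylinder_iff.mpr fun m hm => ?_
  have hm' : m < (silverPrefix u i m).length := by
    rw [length_silverPrefix]; exact Nat.lt_succ_of_le (hLevel_strictMono u).le_apply
  rw [silverBranch, List.getD_eq_getElem _ _ hm']
  rcases le_total m t with h | h
  · exact (silverPrefix_prefix u i h).getElem hm'
  · exact ((silverPrefix_prefix u i h).getElem hm).symm

theorem silverBranch_mem_blockCylinder (u : ℕ → List Bool) (i : ℕ → Bool) (t : ℕ) :
    silverBranch u i ∈ blockCylinder (blockStart u t) (u t ++ [i t]) := by
  cases t with
  | zero => simpa [blockCylinder, blockStart, silverPrefix] using silverBranch_mem_cylinder u i 0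
  | succ t =>
    have h := silverBranch_mem_cylinder u i (t + 1)
    rw [silverPrefix, List.append_assoc, mem_cylinder_append, length_silverPrefix,
      ← blockStart_succ] at h
    exact h.2

theorem silverBranch_blockStart_add {i : ℕ → Bool} {t j : ℕ} (hj : j < (u t).length) :
    silverBranch u i (blockStart u t + j) = (u t)[j] := by
  rw [mem_blockCylinder_iff.mp (silverBranch_mem_blockCylinder u i t) j (by simp; omega)]
  exact List.getElem_append_left hj

theorem silverBranch_hLevel (u : ℕ → List Bool) (i : ℕ → Bool) (t : ℕ) :
    silverBranch u i (hLevel u t) = i t := by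
  rw [hLevel_eq_blockStart_add,
    mem_blockCylinder_iff.mp (silverBranch_mem_blockCylinder u i t) _ (by simp)]
  simp

theorem exists_blockStart_add_eq (u : ℕ → List Bool) (m : ℕ) :
    ∃ t, ∃ j ≤ (u t).length, blockStart u t + j = m := by
  have hex : ∃ t, m ≤ hLevel u t := ⟨m, (hLevel_strictMono u).le_apply⟩
  refine ⟨Nat.find hex, m - blockStart u (Nat.find hex), ?_, ?_⟩
  · have := Nat.find_spec hex
    rw [hLevel_eq_blockStart_add] at this
    omega
  · suffices blockStart u (Nat.find hex) ≤ m by omega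
    cases h : Nat.find hex with
    | zero => simp [blockStart]
    | succ t =>
      have := Nat.find_min hex (show t < Nat.find hex by omega)
      rw [blockStart_succ]
      omega

theorem silverBranch_congr_of_ne_hLevel {m : ℕ} (hm : ∀ t, hLevel u t ≠ m) (i i' : ℕ → Bool) :
    silverBranch u i m = silverBranch u i' m := by
  obtain ⟨t, j, hj, rfl⟩ := exists_blockStart_add_eq u m
  have hj' : j < (u t).length := lt_of_le_of_ne hj fun h => hm t (by rw [h]; rfl)
  rw [silverBranch_blockStart_add hj', silverBranch_blockStart_add hj']

theorem silverBranch_comp_hLevel (u : ℕ → List Bool) (i : ℕ → Bool) :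
    silverBranch u i ∘ hLevel u = i :=
  funext (silverBranch_hLevel u i)

theorem continuous_silverBranch (u : ℕ → List Bool) : Continuous (silverBranch u) := by
  refine continuous_pi fun m => ?_
  by_cases hm : ∃ t, hLevel u t = m
  · obtain ⟨t, rfl⟩ := hm
    simpa only [silverBranch_hLevel] using continuous_apply t
  · push Not at hm
    simpa only [silverBranch_congr_of_ne_hLevel hm _ fun _ => false] using continuous_const

theorem isEmbedding_silverBranch (u : ℕ → List Bool) : IsEmbedding (silverBranch u) :=
  Function.LeftInverse.isEmbedding (f := fun a => a ∘ hLevel u) (silverBranch_comp_hLevel u)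
    (by fun_prop) (continuous_silverBranch u)

theorem branches_silverTree (u : ℕ → List Bool) :
    branches (silverTree u) = range (silverBranch u) := by
  refine Subset.antisymm (fun a ha => ⟨a ∘ hLevel u, funext fun m => ?_⟩) ?_
  · obtain ⟨i, hi⟩ := ha (m + 1)
    rw [length_seqTake] at hi
    have ham := mem_cylinder_iff.mp (hi ▸ mem_cylinder_seqTake a (m + 1)) m
      (by rw [length_seqTake]; omega)
    rw [getElem_seqTake] at ham
    by_cases hm : ∃ t, hLevel u t = m
    · obtain ⟨t, rfl⟩ := hm
      exact silverBranch_hLevel u _ t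
    · push Not at hm
      rw [ham, silverBranch_congr_of_ne_hLevel hm]
  · rintro _ ⟨i, rfl⟩ n
    exact ⟨i, by rw [length_seqTake]⟩

end Branches

/-- The Silver strings with splitting levels `e` whose non-splitting bits are read off `b`. -/
def silverStrings (b : ℕ → Bool) (e : ℕ → ℕ) : ℕ → List Bool
  | 0 => seqTake b (e 0)
  | t + 1 => seqTake (fun j => b (e t + 1 + j)) (e (t + 1) - (e t + 1))

theorem hLevel_silverStrings {e : ℕ → ℕ} (he : StrictMono e) (b : ℕ → Bool) (t : ℕ) :
    hLevel (silverStrings b e) t = e t := by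
  induction t with
  | zero => simp [hLevel_eq_blockStart_add, blockStart, silverStrings, length_seqTake]
  | succ t ih =>
    have := he (lt_add_one t)
    rw [hLevel_eq_blockStart_add, blockStart_succ, ih]
    simp only [silverStrings, length_seqTake]
    omega

theorem silverBranch_silverStrings {e : ℕ → ℕ} (he : StrictMono e) (b i : ℕ → Bool) :
    silverBranch (silverStrings b e) i = Function.extend e i b := by
  funext m
  by_cases hm : ∃ t, e t = m
  · obtain ⟨t, rfl⟩ := hm
    rw [he.injective.extend_apply, ← hLevel_silverStrings he b t, silverBranch_hLevel]
  · rw [Function.extend_apply' _ _ _ hm]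
    obtain ⟨t, j, hj, rfl⟩ := exists_blockStart_add_eq (silverStrings b e) m
    have hj' : j < (silverStrings b e t).length := lt_of_le_of_ne hj fun h =>
      hm ⟨t, by rw [← hLevel_silverStrings he b t, hLevel_eq_blockStart_add, h]⟩
    rw [silverBranch_blockStart_add hj']
    cases t with
    | zero => simp [silverStrings, blockStart, getElem_seqTake]
    | succ t => simp [silverStrings, blockStart_succ, hLevel_silverStrings he, getElem_seqTake]

theorem silverBranch_silverBranch (v w : ℕ → List Bool) (i : ℕ → Bool) :
    silverBranch v (silverBranch w i) =
      Function.extend (hLevel v ∘ hLevel w) i (silverBranch v (silverBranch w fun _ => false)) := by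
  funext m
  by_cases hvw : ∃ t, hLevel v (hLevel w t) = m
  · obtain ⟨t, rfl⟩ := hvw
    rw [silverBranch_hLevel, silverBranch_hLevel]
    exact (((hLevel_strictMono v).comp (hLevel_strictMono w)).injective.extend_apply i _ t).symm
  · rw [Function.extend_apply' (f := hLevel v ∘ hLevel w) i _ m hvw]
    push Not at hvw
    by_cases hv : ∃ k, hLevel v k = m
    · obtain ⟨k, rfl⟩ := hv
      rw [silverBranch_hLevel, silverBranch_hLevel]
      exact silverBranch_congr_of_ne_hLevel (fun t ht => hvw t (by rw [ht])) _ _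
    · push Not at hv
      exact silverBranch_congr_of_ne_hLevel hv _ _

def silverComp (v w : ℕ → List Bool) : ℕ → List Bool :=
  silverStrings (silverBranch v (silverBranch w fun _ => false)) (hLevel v ∘ hLevel w)

theorem silverBranch_silverComp (v w : ℕ → List Bool) :
    silverBranch (silverComp v w) = silverBranch v ∘ silverBranch w := by
  funext i
  rw [silverComp, silverBranch_silverStrings ((hLevel_strictMono v).comp (hLevel_strictMono w)),
    Function.comp_apply, silverBranch_silverBranch v w i]

theorem silverTree_silverComp_subset (v w : ℕ → List Bool) :
    silverTree (silverComp v w) ⊆ silverTree v := by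
  rintro s ⟨i, hs⟩
  exact ⟨silverBranch w i, by rwa [silverBranch_silverComp] at hs⟩

section Fusion

variable {Y : Type*} [TopologicalSpace Y] {G : Set ((ℕ → Bool) × Y)}

theorem exists_cylinder_append_prod_subset (hGo : IsOpen G) (hGd : Dense G) (s : List Bool)
    {V : Set Y} (hVo : IsOpen V) (hVne : V.Nonempty) :
    ∃ (w : List Bool) (V' : Set Y), IsOpen V' ∧ V'.Nonempty ∧ V' ⊆ V ∧
      cylinder (s ++ w) ×ˢ V' ⊆ G := by
  obtain ⟨⟨a₀, y₀⟩, ⟨ha₀, hy₀⟩, hG₀⟩ := hGd.inter_open_nonempty _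
    ((isOpen_cylinder s).prod hVo) ((cylinder_nonempty s).prod hVne)
  obtain ⟨A, hA, B, hB, hABG⟩ := mem_nhds_prod_iff.mp (hGo.mem_nhds hG₀)
  obtain ⟨n, hnA⟩ := exists_cylinder_subset hA
  obtain ⟨V', hV'B, hV'o, hy₀V'⟩ := mem_nhds_iff.mp hB
  obtain ⟨w, hw⟩ := prefix_seqTake_of_mem_cylinder ha₀ (le_max_right n s.length)
  refine ⟨w, V' ∩ V, hV'o.inter hVo, ⟨y₀, hy₀V', hy₀⟩, inter_subset_right, ?_⟩
  rintro ⟨a, y⟩ ⟨ha, hy⟩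
  refine hABG ⟨hnA (cylinder_anti ?_ (hw ▸ ha)), hV'B hy.1⟩
  exact prefix_seqTake_of_mem_cylinder (mem_cylinder_seqTake a₀ n)
    ((length_seqTake a₀ n).trans_le (le_max_left _ _))

theorem exists_forall_cylinder_append_prod_subset (hGo : IsOpen G) (hGd : Dense G)
    (P : Finset (List Bool)) {V : Set Y} (hVo : IsOpen V) (hVne : V.Nonempty) :
    ∃ (w : List Bool) (V' : Set Y), IsOpen V' ∧ V'.Nonempty ∧ V' ⊆ V ∧
      ∀ s ∈ P, cylinder (s ++ w) ×ˢ V' ⊆ G := by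
  induction P using Finset.induction_on with
  | empty => exact ⟨[], V, hVo, hVne, subset_rfl, by simp⟩
  | insert s P _ ih =>
    obtain ⟨w, V₁, hV₁o, hV₁ne, hV₁V, hP⟩ := ih
    obtain ⟨r, V₂, hV₂o, hV₂ne, hV₂V₁, hs⟩ :=
      exists_cylinder_append_prod_subset hGo hGd (s ++ w) hV₁o hV₁ne
    refine ⟨w ++ r, V₂, hV₂o, hV₂ne, hV₂V₁.trans hV₁V, ?_⟩
    simp only [Finset.mem_insert, forall_eq_or_imp, ← List.append_assoc]
    exact ⟨hs, fun s' hs' =>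
      (prod_mono (cylinder_anti (List.prefix_append _ _)) hV₂V₁).trans (hP s' hs')⟩

theorem exists_blockCylinder_prod_subset (hGo : IsOpen G) (hGd : Dense G) (L : ℕ)
    {V : Set Y} (hVo : IsOpen V) (hVne : V.Nonempty) :
    ∃ (w : List Bool) (V' : Set Y), IsOpen V' ∧ V'.Nonempty ∧ V' ⊆ V ∧
      blockCylinder L w ×ˢ V' ⊆ G := by
  obtain ⟨w, V', hV'o, hV'ne, hV'V, hP⟩ := exists_forall_cylinder_append_prod_subset hGo hGd
    (List.finite_length_eq Bool L).toFinset hVo hVne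
  refine ⟨w, V', hV'o, hV'ne, hV'V, fun ⟨a, y⟩ ⟨ha, hy⟩ => hP (seqTake a L) ?_ ⟨?_, hy⟩⟩
  · simp [length_seqTake]
  · rw [mem_cylinder_append, length_seqTake]
    exact ⟨mem_cylinder_seqTake a L, ha⟩

/-- `fusionStart W t` is where the `t`-th block starts when each block `t` is chosen as
`W t` applied to its own starting position. -/
def fusionStart (W : ℕ → ℕ → List Bool) : ℕ → ℕ
  | 0 => 0
  | t + 1 => fusionStart W t + (W t (fusionStart W t)).length + 1

theorem blockStart_fusionStart (W : ℕ → ℕ → List Bool) (t : ℕ) :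
    blockStart (fun t => W t (fusionStart W t)) t = fusionStart W t := by
  induction t with
  | zero => rfl
  | succ t ih => rw [blockStart_succ, hLevel_eq_blockStart_add, ih, fusionStart]

theorem exists_range_silverBranch_prod_subset [SecondCountableTopology Y] [BaireSpace Y]
    {C : Set ((ℕ → Bool) × Y)} (hC : C ∈ residual _) :
    ∃ (w : ℕ → List Bool) (D : Set Y), IsGδ D ∧ Dense D ∧ range (silverBranch w) ×ˢ D ⊆ C := by
  obtain ⟨G, hGo, hGd, hGC⟩ := exists_seq_isOpen_dense_iInter_subset hC
  obtain ⟨B, hB⟩ := TopologicalSpace.exists_seq_basis Y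
  -- stage `t` serves the dense open set `G n` and the basic open set `B k`, `(n, k) = t.unpair`
  have stage : ∀ t L : ℕ, ∃ (w : List Bool) (V : Set Y), IsOpen V ∧ V ⊆ B t.unpair.2 ∧
      ((B t.unpair.2).Nonempty → V.Nonempty) ∧ blockCylinder L w ×ˢ V ⊆ G t.unpair.1 := by
    intro t L
    by_cases hne : (B t.unpair.2).Nonempty
    · obtain ⟨w, V, hVo, hVne, hVB, hsub⟩ :=
        exists_blockCylinder_prod_subset (hGo _) (hGd _) L (hB.isOpen (mem_range_self _)) hne
      exact ⟨w, V, hVo, hVB, fun _ => hVne, hsub⟩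
    · exact ⟨[], ∅, isOpen_empty, empty_subset _, fun h => absurd h hne, by simp⟩
  choose W V hVo hVB hVne hWV using stage
  let D n := ⋃ t ∈ {t | t.unpair.1 = n}, V t (fusionStart W t)
  have hDo : ∀ n, IsOpen (D n) := fun n => isOpen_biUnion fun t _ => hVo _ _
  refine ⟨fun t => W t (fusionStart W t), ⋂ n, D n, IsGδ.iInter_of_isOpen hDo,
    dense_iInter_of_isOpen_nat hDo fun n => ?_, ?_⟩
  · refine dense_iff_inter_open.mpr fun U hUo ⟨y, hy⟩ => ?_
    obtain ⟨_, ⟨k, rfl⟩, hyB, hBU⟩ := hB.exists_subset_of_mem_open hy hUo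
    have hnk : (Nat.pair n k).unpair = (n, k) := Nat.unpair_pair n k
    obtain ⟨z, hz⟩ := hVne (Nat.pair n k) (fusionStart W _) (by rw [hnk]; exact ⟨y, hyB⟩)
    have hzB := hVB _ _ hz
    rw [hnk] at hzB
    exact ⟨z, hBU hzB, mem_biUnion (by simp [hnk]) hz⟩
  · rintro ⟨_, y⟩ ⟨⟨i, rfl⟩, hy⟩
    refine hGC (mem_iInter.mpr fun n => ?_)
    obtain ⟨t, rfl, hyt⟩ := mem_iUnion₂.mp (mem_iInter.mp hy n)
    refine hWV t _ ⟨?_, hyt⟩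
    have hblock := silverBranch_mem_blockCylinder (fun t => W t (fusionStart W t)) i t
    rw [blockStart_fusionStart] at hblock
    exact preimage_mono (cylinder_anti (List.prefix_append _ _)) hblock

end Fusion

end Silver

open Silver

theorem borel_continuous_on_silver_times_Gdelta (T : Set (List Bool)) (hT : IsSilver T)
    (f : (ℕ → Bool) × (ℕ → ℕ) → (ℕ → Bool)) (hf : Measurable f) :
    ∃ (S : Set (List Bool)) (D : Set (ℕ → ℕ)),
      IsSilver S ∧ S ⊆ T ∧ IsGδ D ∧ Dense D ∧
        ContinuousOn f (branches S ×ˢ D) := by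
  obtain ⟨v, rfl⟩ := hT
  have hemb : IsEmbedding (Prod.map (silverBranch v) (id : (ℕ → ℕ) → (ℕ → ℕ))) :=
    (isEmbedding_silverBranch v).prodMap .id
  obtain ⟨C, hC, hfC⟩ := (hf.comp hemb.continuous.measurable).exists_mem_residual_continuousOn
  obtain ⟨w, D, hDG, hDd, hwD⟩ := exists_range_silverBranch_prod_subset hC
  refine ⟨silverTree (silverComp v w), D, ⟨_, rfl⟩, silverTree_silverComp_subset v w, hDG, hDd, ?_⟩
  rw [branches_silverTree, silverBranch_silverComp, range_comp, ← image_id D,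
    ← prodMap_image_prod]
  exact hemb.isInducing.continuousOn_image_iff.mpr (hfC.mono hwD)
end

section
/- Every dense Gδ subset of Baire space ℕ^ℕ is homeomorphic to ℕ^ℕ. -/
open List

/-!
Write `D = ⋂ m, U m` with every `U m` open and dense. A cylinder `C` meets `U` in a disjoint union
of cylinders, the least ones around each of its points that are strictly deeper than `C` and lie
in `U`: countably many because they are disjoint open sets of a separable space, infinitely many
because `U` is dense. Iterating this along the levels `m` gives a tree of cylinders indexed by
`ℕ^{<ω}` whose depths grow along every branch, so a branch `x` determines a single point. The map
sending `x` to that point carries the depth-`n` cylinder around `x` onto the part of `D` in the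
cylinder at node `x|n`; hence it is a continuous open bijection from `ℕ → ℕ` onto `D`.
-/

open PiNat Set Function

namespace PiNat

theorem exists_forall_res_of_cons {α : Type*} {P : List α → Prop} (hnil : P [])
    (hcons : ∀ s, P s → ∃ a, P (a :: s)) : ∃ x : ℕ → α, ∀ n, P (res x n) := by
  choose c hc using hcons
  let S : ℕ → {s // P s} := fun n => Nat.rec ⟨[], hnil⟩ (fun _ p => ⟨c p.1 p.2 :: p.1, hc _ _⟩) n
  refine ⟨fun n => c (S n).1 (S n).2, fun n => ?_⟩
  suffices res (fun n => c (S n).1 (S n).2) n = (S n).1 from this ▸ (S n).2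
  induction n with
  | zero => rfl
  | succ n ih => rw [res_succ, ih]

variable {E : ℕ → Type*}

theorem apply_eq_of_cylinder_subset {a b : ∀ n, E n} {p q i : ℕ}
    (h : cylinder a p ⊆ cylinder b q) (hi : i < q) : a i = b i :=
  mem_cylinder_iff.1 (h (self_mem_cylinder a p)) i hi

theorem cylinder_subset_of_mem {x y : ∀ n, E n} {m n : ℕ} (hy : y ∈ cylinder x m) (h : m ≤ n) :
    cylinder y n ⊆ cylinder x m := by
  rw [← mem_cylinder_iff_eq.1 hy]
  exact cylinder_anti y h

end PiNat

namespace BaireSpace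

section EntryDepth

variable {U : Set (ℕ → ℕ)} {k : ℕ} {y w : ℕ → ℕ}

noncomputable def entryDepth (U : Set (ℕ → ℕ)) (k : ℕ) (y : ℕ → ℕ) : ℕ :=
  sInf {n | k < n ∧ cylinder y n ⊆ U}

theorem entryDepth_spec (hU : IsOpen U) (hy : y ∈ U) :
    k < entryDepth U k y ∧ cylinder y (entryDepth U k y) ⊆ U := by
  apply Nat.sInf_mem (s := {n | k < n ∧ cylinder y n ⊆ U})
  obtain ⟨_, ⟨x, n, rfl⟩, hyx, hxU⟩ :=
    (isTopologicalBasis_cylinders fun _ => ℕ).exists_subset_of_mem_open hy hU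
  rw [← mem_cylinder_iff_eq.1 hyx] at hxU
  exact ⟨max n (k + 1), by omega, (cylinder_anti y (le_max_left n _)).trans hxU⟩

theorem entryDepth_eq_of_mem (hU : IsOpen U) (hy : y ∈ U)
    (hw : w ∈ cylinder y (entryDepth U k y)) : entryDepth U k w = entryDepth U k y := by
  have hiff : ∀ n ≤ entryDepth U k y, cylinder w n = cylinder y n := fun n hn =>
    mem_cylinder_iff_eq.1 (cylinder_anti y hn hw)
  obtain ⟨hk, hsub⟩ := entryDepth_spec (k := k) hU hy
  have hle : entryDepth U k w ≤ entryDepth U k y :=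
    Nat.sInf_le ⟨hk, (hiff _ le_rfl).symm ▸ hsub⟩
  obtain ⟨hk', hsub'⟩ := entryDepth_spec (k := k) hU (hsub hw)
  exact hle.antisymm (Nat.sInf_le ⟨hk', hiff _ hle ▸ hsub'⟩)

end EntryDepth

def entryCylinders (U : Set (ℕ → ℕ)) (z : ℕ → ℕ) (k : ℕ) : Set (Set (ℕ → ℕ)) :=
  (fun y => cylinder y (entryDepth U k y)) '' (cylinder z k ∩ U)

section EntryCylinders

variable {U : Set (ℕ → ℕ)} (hU : IsOpen U) (z : ℕ → ℕ) (k : ℕ)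
include hU

theorem pairwiseDisjoint_entryCylinders : (entryCylinders U z k).PairwiseDisjoint id := by
  rintro _ ⟨y, ⟨-, hy⟩, rfl⟩ _ ⟨y', ⟨-, hy'⟩, rfl⟩ hne
  refine Set.disjoint_left.2 fun w hw hw' => hne ?_
  calc cylinder y (entryDepth U k y) = cylinder w (entryDepth U k w) := by
        rw [entryDepth_eq_of_mem hU hy hw, mem_cylinder_iff_eq.1 hw]
    _ = cylinder y' (entryDepth U k y') := by
        rw [entryDepth_eq_of_mem hU hy' hw', mem_cylinder_iff_eq.1 hw']

theorem countable_entryCylinders : (entryCylinders U z k).Countable :=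
  (pairwiseDisjoint_entryCylinders hU z k).countable_of_isOpen
    (fun _ ⟨_, _, h⟩ => h ▸ isOpen_cylinder _ _ _)
    (fun _ ⟨y, _, h⟩ => h ▸ ⟨y, self_mem_cylinder _ _⟩)

theorem infinite_entryCylinders (hd : Dense U) : (entryCylinders U z k).Infinite := by
  have hne : ∀ a : ℕ, (cylinder (update z k a) (k + 1) ∩ U).Nonempty := fun a =>
    hd.inter_open_nonempty _ (isOpen_cylinder _ _ _) ⟨_, self_mem_cylinder _ _⟩
  choose y hyc hyU using hne
  have hyk : ∀ a, y a k = a := fun a =>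
    (mem_cylinder_iff.1 (hyc a) k k.lt_succ_self).trans (by simp)
  have hyz : ∀ a, y a ∈ cylinder z k := fun a =>
    cylinder_subset_of_mem (update_mem_cylinder z k a) k.le_succ (hyc a)
  refine infinite_of_injective_forall_mem (f := fun a => cylinder (y a) (entryDepth U k (y a)))
    (fun a b hab => ?_) fun a => ⟨y a, ⟨hyz a, hyU a⟩, rfl⟩
  rw [← hyk a, ← hyk b]
  exact apply_eq_of_cylinder_subset hab.le (entryDepth_spec hU (hyU b)).1

end EntryCylinders

structure IsCylinderPartition (U : Set (ℕ → ℕ)) (z : ℕ → ℕ) (k : ℕ) (c : ℕ → ℕ → ℕ)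
    (l : ℕ → ℕ) : Prop where
  lt : ∀ n, k < l n
  subset : ∀ n, cylinder (c n) (l n) ⊆ cylinder z k ∩ U
  disjoint : Pairwise fun n m => Disjoint (cylinder (c n) (l n)) (cylinder (c m) (l m))
  cover : cylinder z k ∩ U ⊆ ⋃ n, cylinder (c n) (l n)

theorem exists_isCylinderPartition {U : Set (ℕ → ℕ)} (hU : IsOpen U) (hd : Dense U)
    (z : ℕ → ℕ) (k : ℕ) : ∃ c l, IsCylinderPartition U z k c l := by
  have := (countable_entryCylinders hU z k).to_subtype
  have := (infinite_entryCylinders hU z k hd).to_subtype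
  obtain ⟨e⟩ : Nonempty (ℕ ≃ entryCylinders U z k) := inferInstance
  have hrep : ∀ n, ∃ y ∈ cylinder z k ∩ U, cylinder y (entryDepth U k y) = e n := fun n => (e n).2
  choose c hc hce using hrep
  have hspec (n : ℕ) := entryDepth_spec (k := k) hU (hc n).2
  refine ⟨c, fun n => entryDepth U k (c n), fun n => (hspec n).1,
    fun n => subset_inter (cylinder_subset_of_mem (hc n).1 (hspec n).1.le) (hspec n).2,
    fun n m hnm => ?_, fun w hw => mem_iUnion.2 ⟨e.symm ⟨_, w, hw, rfl⟩, ?_⟩⟩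
  · simp only [hce]
    exact pairwiseDisjoint_entryCylinders hU z k (e n).2 (e m).2
      (Subtype.coe_injective.ne (e.injective.ne hnm))
  · rw [hce, e.apply_symm_apply]
    exact self_mem_cylinder _ _

/-- Nodes are finite sequences stored last entry first, as `PiNat.res` does; node `s` carries
the cylinder `cylinder (z s) (k s)`. -/
structure IsLusinScheme (U : ℕ → Set (ℕ → ℕ)) (z : List ℕ → ℕ → ℕ) (k : List ℕ → ℕ) : Prop where
  nil : k [] = 0
  cons : ∀ s, IsCylinderPartition (U s.length) (z s) (k s) (fun n => z (n :: s))
    (fun n => k (n :: s))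

theorem exists_isLusinScheme {U : ℕ → Set (ℕ → ℕ)} (hU : ∀ m, IsOpen (U m))
    (hd : ∀ m, Dense (U m)) : ∃ z k, IsLusinScheme U z k := by
  choose c l hcl using fun m => exists_isCylinderPartition (hU m) (hd m)
  let node : List ℕ → (ℕ → ℕ) × ℕ := fun s =>
    s.rec (0, 0) fun n s p => (c s.length p.1 p.2 n, l s.length p.1 p.2 n)
  exact ⟨fun s => (node s).1, fun s => (node s).2, rfl, fun s => hcl _ _ _⟩

/-- The `i`-th coordinate is read off the node at level `i + 1`, whose cylinder has depth `> i`. -/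
def schemeMap (z : List ℕ → ℕ → ℕ) (x : ℕ → ℕ) : ℕ → ℕ := fun i => z (res x (i + 1)) i

theorem continuous_schemeMap (z : List ℕ → ℕ → ℕ) : Continuous (schemeMap z) := by
  refine continuous_pi fun i => IsLocallyConstant.continuous ?_
  refine (IsLocallyConstant.iff_exists_open _).2 fun x =>
    ⟨cylinder x (i + 1), isOpen_cylinder _ _ _, self_mem_cylinder _ _, fun y hy => ?_⟩
  rw [cylinder_eq_res] at hy
  simp only [schemeMap, hy.out]

namespace IsLusinScheme

variable {U : ℕ → Set (ℕ → ℕ)} {z : List ℕ → ℕ → ℕ} {k : List ℕ → ℕ}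
  (h : IsLusinScheme U z k)
include h

theorem length_le_depth (s : List ℕ) : s.length ≤ k s := by
  induction s with
  | nil => simp
  | cons n s ih => exact ih.trans_lt ((h.cons s).lt n)

theorem lt_depth_res_succ (x : ℕ → ℕ) (i : ℕ) : i < k (res x (i + 1)) :=
  i.lt_succ_self.trans_le ((res_length x (i + 1)).ge.trans (h.length_le_depth _))

theorem cylinder_cons_subset (n : ℕ) (s : List ℕ) :
    cylinder (z (n :: s)) (k (n :: s)) ⊆ cylinder (z s) (k s) :=
  ((h.cons s).subset n).trans inter_subset_left

theorem cylinder_res_anti (x : ℕ → ℕ) {m n : ℕ} (hmn : m ≤ n) :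
    cylinder (z (res x n)) (k (res x n)) ⊆ cylinder (z (res x m)) (k (res x m)) :=
  antitone_nat_of_succ_le (f := fun n => cylinder (z (res x n)) (k (res x n)))
    (fun n => by simp only [res_succ, h.cylinder_cons_subset]) hmn

theorem schemeMap_mem (x : ℕ → ℕ) (n : ℕ) :
    schemeMap z x ∈ cylinder (z (res x n)) (k (res x n)) := by
  refine mem_cylinder_iff.2 fun i hi => ?_
  show z (res x (i + 1)) i = z (res x n) i
  rcases le_total (i + 1) n with hle | hle
  · exact (apply_eq_of_cylinder_subset (h.cylinder_res_anti x hle) (h.lt_depth_res_succ x i)).symm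
  · exact apply_eq_of_cylinder_subset (h.cylinder_res_anti x hle) hi

theorem schemeMap_mem_iInter (x : ℕ → ℕ) : schemeMap z x ∈ ⋂ m, U m := by
  refine mem_iInter.2 fun m => ?_
  have hsub := (h.cons (res x m)).subset (x m)
  rw [res_length] at hsub
  exact (hsub (res_succ x m ▸ h.schemeMap_mem x (m + 1))).2

theorem eq_schemeMap_of_forall_mem {x y : ℕ → ℕ}
    (hy : ∀ n, y ∈ cylinder (z (res x n)) (k (res x n))) : y = schemeMap z x :=
  funext fun i => mem_cylinder_iff.1 (hy (i + 1)) i (h.lt_depth_res_succ x i)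

theorem res_eq_of_mem {x w y : ℕ → ℕ} {n : ℕ} (hx : y ∈ cylinder (z (res x n)) (k (res x n)))
    (hw : y ∈ cylinder (z (res w n)) (k (res w n))) : res x n = res w n := by
  induction n with
  | zero => rfl
  | succ n ih =>
    simp only [res_succ] at hx hw ⊢
    have hs := ih (h.cylinder_cons_subset _ _ hx) (h.cylinder_cons_subset _ _ hw)
    rw [hs] at hx ⊢
    rw [(h.cons (res w n)).disjoint.eq (not_disjoint_iff.2 ⟨y, hx, hw⟩)]

theorem schemeMap_injective : Injective (schemeMap z) := fun x w hxw =>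
  res_injective <| funext fun n => h.res_eq_of_mem (h.schemeMap_mem x n) (hxw ▸ h.schemeMap_mem w n)

theorem exists_forall_mem {y : ℕ → ℕ} (hy : y ∈ ⋂ m, U m) :
    ∃ x, ∀ n, y ∈ cylinder (z (res x n)) (k (res x n)) :=
  exists_forall_res_of_cons (P := fun s => y ∈ cylinder (z s) (k s))
    (by simp only [h.nil, cylinder_zero, mem_univ])
    fun s hs => mem_iUnion.1 ((h.cons s).cover ⟨hs, mem_iInter.1 hy _⟩)

theorem image_cylinder (x : ℕ → ℕ) (n : ℕ) :
    schemeMap z '' cylinder x n = (⋂ m, U m) ∩ cylinder (z (res x n)) (k (res x n)) := by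
  ext y
  constructor
  · rintro ⟨w, hw, rfl⟩
    rw [cylinder_eq_res] at hw
    exact ⟨h.schemeMap_mem_iInter w, hw.out ▸ h.schemeMap_mem w n⟩
  · rintro ⟨hyU, hyx⟩
    obtain ⟨w, hw⟩ := h.exists_forall_mem hyU
    refine ⟨w, ?_, (h.eq_schemeMap_of_forall_mem hw).symm⟩
    rw [cylinder_eq_res]
    exact h.res_eq_of_mem (hw n) hyx

theorem isHomeomorph_codRestrict :
    IsHomeomorph (codRestrict (schemeMap z) _ h.schemeMap_mem_iInter) where
  continuous := (continuous_schemeMap z).codRestrict _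
  isOpenMap := by
    refine (isTopologicalBasis_cylinders _).isOpenMap_iff.2 ?_
    rintro _ ⟨x, n, rfl⟩
    rw [← Subtype.val_injective.preimage_image (_ '' _), ← image_comp]
    change IsOpen (Subtype.val ⁻¹' (schemeMap z '' cylinder x n))
    rw [h.image_cylinder, Subtype.preimage_coe_self_inter]
    exact (isOpen_cylinder _ _ _).preimage continuous_subtype_val
  bijective := by
    refine ⟨(injective_codRestrict _).2 h.schemeMap_injective, (surjective_codRestrict _).2 ?_⟩
    simpa [res_zero, h.nil] using h.image_cylinder 0 0

end IsLusinScheme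

end BaireSpace

theorem dense_Gdelta_homeo_baire (D : Set (ℕ → ℕ)) (hD : IsGδ D) (hdense : Dense D) :
    Nonempty (D ≃ₜ (ℕ → ℕ)) := by
  obtain ⟨U, hU, rfl⟩ := hD.eq_iInter_nat
  obtain ⟨z, k, h⟩ := BaireSpace.exists_isLusinScheme hU fun m => hdense.mono (iInter_subset U m)
  exact ⟨(h.isHomeomorph_codRestrict.homeomorph _).symm⟩
end

section
/- If T is a Silver tree and f : 2^ℕ → 2^ℕ is continuous, then there is a Silver tree S ⊆ T such that f restricted to [S] is either injective or constant. -/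
open List

section SilverProofSection
open Classical
noncomputable section
namespace SilverProof


def flip1 (k : ℕ) (a : ℕ → Bool) : ℕ → Bool := fun m => if m = k then !a m else a m

def flipF (s : Finset ℕ) (a : ℕ → Bool) : ℕ → Bool := fun m => if m ∈ s then !a m else a m

def cube (x : ℕ → Bool) (I : Set ℕ) : Set (ℕ → Bool) := {a | ∀ m, m ∉ I → a m = x m}

lemma flip1_apply (k : ℕ) (a : ℕ → Bool) (m : ℕ) :
    flip1 k a m = if m = k then !a m else a m := rfl

@[simp] lemma flip1_self (k : ℕ) (a : ℕ → Bool) : flip1 k a k = !a k := by simp [flip1]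

lemma flip1_ne (k : ℕ) (a : ℕ → Bool) {m : ℕ} (h : m ≠ k) : flip1 k a m = a m := by
  simp [flip1, h]

@[simp] lemma flip1_flip1 (k : ℕ) (a : ℕ → Bool) : flip1 k (flip1 k a) = a := by
  funext m; by_cases h : m = k <;> simp [flip1, h]

lemma flipF_mem {s : Finset ℕ} (a : ℕ → Bool) {m : ℕ} (h : m ∈ s) : flipF s a m = !a m := by
  simp [flipF, h]

lemma flipF_notMem {s : Finset ℕ} (a : ℕ → Bool) {m : ℕ} (h : m ∉ s) : flipF s a m = a m := by
  simp [flipF, h]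

@[simp] lemma flipF_empty (a : ℕ → Bool) : flipF ∅ a = a := by funext m; simp [flipF]

@[simp] lemma flipF_flipF (s : Finset ℕ) (a : ℕ → Bool) : flipF s (flipF s a) = a := by
  funext m; by_cases h : m ∈ s <;> simp [flipF, h]

lemma flipF_insert {k : ℕ} {s : Finset ℕ} (hk : k ∉ s) (a : ℕ → Bool) :
    flipF (insert k s) a = flip1 k (flipF s a) := by
  funext m
  by_cases hm : m = k
  · subst hm; simp [flipF, flip1, hk]
  · by_cases hms : m ∈ s <;> simp [flipF, flip1, hm, hms]

lemma flip1_flipF_comm {k : ℕ} {s : Finset ℕ} (hk : k ∉ s) (a : ℕ → Bool) :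
    flip1 k (flipF s a) = flipF s (flip1 k a) := by
  funext m
  by_cases hm : m = k
  · subst hm; simp [flipF, flip1, hk]
  · by_cases hms : m ∈ s <;> simp [flipF, flip1, hm, hms]

lemma self_mem_cube (x : ℕ → Bool) (I : Set ℕ) : x ∈ cube x I := fun _ _ => rfl

lemma flip1_mem_cube {x : ℕ → Bool} {I : Set ℕ} {a : ℕ → Bool} {k : ℕ}
    (ha : a ∈ cube x I) (hk : k ∈ I) : flip1 k a ∈ cube x I := by
  intro m hm
  rw [flip1_ne k a (fun h => hm (by rw [h]; exact hk))]
  exact ha m hm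

lemma flipF_mem_cube {x : ℕ → Bool} {I : Set ℕ} {a : ℕ → Bool} {s : Finset ℕ}
    (ha : a ∈ cube x I) (hs : ↑s ⊆ I) : flipF s a ∈ cube x I := by
  intro m hm
  rw [flipF_notMem a (fun h => hm (hs h))]
  exact ha m hm

lemma cube_free_subset {y x : ℕ → Bool} {J I : Set ℕ}
    (h : cube y J ⊆ cube x I) : J ⊆ I := by
  intro k hk
  by_contra hkI
  have h1 := h (self_mem_cube y J) k hkI
  have h2 := h (flip1_mem_cube (self_mem_cube y J) hk) k hkI
  rw [flip1_self, h1] at h2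
  exact (Bool.not_ne_self _ h2).elim

lemma cube_congr {x y : ℕ → Bool} {J : Set ℕ} (h : ∀ m ∉ J, x m = y m) :
    cube x J = cube y J := by
  ext a
  constructor <;> intro ha m hm
  · rw [ha m hm, h m hm]
  · rw [ha m hm, h m hm]

lemma cube_mono_free {x : ℕ → Bool} {J I : Set ℕ} (h : J ⊆ I) : cube x J ⊆ cube x I :=
  fun a ha m hm => ha m (fun hJ => hm (h hJ))

/-- pointwise modulus of continuity -/
lemma modulus {f : (ℕ → Bool) → (ℕ → Bool)} (hf : Continuous f) (a : ℕ → Bool) (n : ℕ) :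
    ∃ M, ∀ b, (∀ m < M, b m = a m) → f b n = f a n := by
  have hopen : IsOpen ((fun b => f b n) ⁻¹' {f a n}) :=
    ((continuous_apply n).comp hf).isOpen_preimage _ (isOpen_discrete _)
  have hmem : a ∈ (fun b => f b n) ⁻¹' {f a n} := rfl
  rw [isOpen_pi_iff] at hopen
  obtain ⟨I, u, hu, hsub⟩ := hopen a hmem
  refine ⟨(I.sup id) + 1, fun b hb => ?_⟩
  have : b ∈ (I : Set ℕ).pi u := by
    intro i hi
    have : b i = a i := hb i (Nat.lt_succ_of_le (Finset.le_sup (f := id) hi))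
    rw [this]
    exact (hu i hi).2
  exact hsub this

/-- modulus for finitely many output coordinates -/
lemma modulusN {f : (ℕ → Bool) → (ℕ → Bool)} (hf : Continuous f) (a : ℕ → Bool) (N : ℕ) :
    ∃ M, ∀ b, (∀ m < M, b m = a m) → ∀ n < N, f b n = f a n := by
  induction N with
  | zero => exact ⟨0, fun b _ n hn => absurd hn (Nat.not_lt_zero n)⟩
  | succ N ih =>
    obtain ⟨M1, hM1⟩ := ih
    obtain ⟨M2, hM2⟩ := modulus hf a N
    refine ⟨max M1 M2, fun b hb n hn => ?_⟩
    rcases Nat.lt_succ_iff_lt_or_eq.mp hn with h | h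
    · exact hM1 b (fun m hm => hb m (lt_of_lt_of_le hm (le_max_left _ _))) n h
    · subst h; exact hM2 b (fun m hm => hb m (lt_of_lt_of_le hm (le_max_right _ _)))



-- placeholders from chunk a

lemma bool_eq_not {a b : Bool} (h : a ≠ b) : a = !b := by
  cases a <;> cases b <;> simp_all

lemma finset_bound {α : Type*} (s : Finset α) (Q : α → ℕ → Prop)
    (hmono : ∀ x M M', M ≤ M' → Q x M → Q x M')
    (h : ∀ x ∈ s, ∃ M, Q x M) : ∃ M, ∀ x ∈ s, Q x M := by
  classical
  induction s using Finset.induction_on with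
  | empty => exact ⟨0, fun x hx => absurd hx (Finset.notMem_empty x)⟩
  | @insert j s hjs ih =>
    obtain ⟨M1, hM1⟩ := ih (fun x hxs => h x (Finset.mem_insert_of_mem hxs))
    obtain ⟨M2, hM2⟩ := h j (Finset.mem_insert_self j s)
    refine ⟨max M1 M2, fun x hxi => ?_⟩
    rcases Finset.mem_insert.mp hxi with rfl | hxs
    · exact hmono x M2 _ (le_max_right _ _) hM2
    · exact hmono x M1 _ (le_max_left _ _) (hM1 x hxs)

lemma flipF_subset_notMem_Z {Z : Set (ℕ → Bool)} {G : Finset ℕ}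
    (hinv : ∀ a ∈ Z, ∀ j ∈ G, flip1 j a ∈ Z) {a : ℕ → Bool} (ha : a ∉ Z) :
    ∀ τ : Finset ℕ, ↑τ ⊆ (G : Set ℕ) → flipF τ a ∉ Z := by
  have hinvc : ∀ b ∉ Z, ∀ j ∈ G, flip1 j b ∉ Z := by
    intro b hb j hj hmem
    exact hb (by rw [← flip1_flip1 j b]; exact hinv _ hmem j hj)
  intro τ
  induction τ using Finset.induction_on with
  | empty => intro _; simpa [flipF] using ha
  | @insert j s hjs ih =>
    intro hsub
    rw [flipF_insert hjs]
    exact hinvc _ (ih (fun m hm => hsub (Finset.mem_insert_of_mem hm))) j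
      (hsub (Finset.mem_insert_self j s))

/-- Core tool: either the cube is inside the closed `G`-invariant set `Z`,
or some subcube (keeping `G` free) avoids `Z` entirely. -/
lemma avoid_or_inside {x0 : ℕ → Bool} {I0 : Set ℕ} (hI0 : I0.Infinite) {G : Finset ℕ}
    (hG : ↑G ⊆ I0) {Z : Set (ℕ → Bool)}
    (hcl : ∀ a ∉ Z, ∃ M, ∀ b, (∀ m < M, b m = a m) → b ∉ Z)
    (hinv : ∀ a ∈ Z, ∀ j ∈ G, flip1 j a ∈ Z) :
    cube x0 I0 ⊆ Z ∨ ∃ y J, J.Infinite ∧ ↑G ⊆ J ∧ cube y J ⊆ cube x0 I0 ∧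
      ∀ a ∈ cube y J, a ∉ Z := by
  by_cases hsub : cube x0 I0 ⊆ Z
  · exact Or.inl hsub
  · right
    obtain ⟨a, ha, haZ⟩ : ∃ a ∈ cube x0 I0, a ∉ Z := by
      by_contra hc
      push_neg at hc
      exact hsub (fun b hb => hc b hb)
    have hτ : ∀ τ ∈ G.powerset, ∃ M, ∀ b, (∀ m < M, b m = flipF τ a m) → b ∉ Z := by
      intro τ hτ
      exact hcl _ (flipF_subset_notMem_Z hinv haZ τ
        (by exact_mod_cast Finset.mem_powerset.mp hτ))
    obtain ⟨M, hM⟩ := finset_bound G.powerset _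
      (fun τ M M' hle hQ b hb => hQ b (fun m hm => hb m (lt_of_lt_of_le hm hle))) hτ
    set M' := max M ((G.sup id) + 1) with hM'def
    refine ⟨a, (I0 \ {m | m < M'}) ∪ ↑G, ?_, ?_, ?_, ?_⟩
    · exact ((hI0.diff (Set.finite_lt_nat M')).mono Set.subset_union_left)
    · exact Set.subset_union_right
    · intro b hb m hm
      have hmJ : m ∉ (I0 \ {m | m < M'}) ∪ ↑G := by
        intro hmem
        rcases hmem with h | h
        · exact hm h.1
        · exact hm (hG h)
      rw [hb m hmJ]
      exact ha m hm
    · intro b hb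
      set τ := G.filter (fun j => b j ≠ a j) with hτdef
      have hτG : ↑τ ⊆ (G : Set ℕ) := by
        intro m hm
        exact_mod_cast Finset.filter_subset _ _ (by exact_mod_cast hm)
      refine hM τ (Finset.mem_powerset.mpr (Finset.filter_subset _ _)) b (fun m hm => ?_)
      by_cases hmG : m ∈ G
      · by_cases hmτ : m ∈ τ
        · rw [flipF_mem a hmτ]
          exact bool_eq_not ((Finset.mem_filter.mp hmτ).2)
        · rw [flipF_notMem a hmτ]
          have : ¬ b m ≠ a m := fun hne => hmτ (Finset.mem_filter.mpr ⟨hmG, hne⟩)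
          exact not_not.mp this
      · have hmM' : m < M' := lt_of_lt_of_le hm (le_max_left _ _)
        have hmJ : m ∉ (I0 \ {m | m < M'}) ∪ ↑G := by
          intro hmem
          rcases hmem with h | h
          · exact h.2 hmM'
          · exact hmG (by exact_mod_cast h)
        rw [hb m hmJ, flipF_notMem a (fun hmτ => hmG (Finset.filter_subset _ _ hmτ))]



section Chain
variable {C : ℕ → (ℕ → Bool) × Set ℕ}
  (hdec : ∀ n, cube (C (n+1)).1 (C (n+1)).2 ⊆ cube (C n).1 (C n).2)

lemma chain_subset (hdec : ∀ n, cube (C (n+1)).1 (C (n+1)).2 ⊆ cube (C n).1 (C n).2)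
    {n m : ℕ} (h : n ≤ m) : cube (C m).1 (C m).2 ⊆ cube (C n).1 (C n).2 := by
  induction m with
  | zero => rw [Nat.le_zero.mp h]
  | succ m ih =>
    rcases Nat.le_succ_iff_eq_or_le.mp h with rfl | h'
    · rfl
    · exact le_trans (hdec m) (ih h')

lemma chain_cons (hdec : ∀ n, cube (C (n+1)).1 (C (n+1)).2 ⊆ cube (C n).1 (C n).2)
    {n n' m : ℕ} (h1 : m ∉ (C n).2) (h2 : m ∉ (C n').2) : (C n).1 m = (C n').1 m := by
  set b := (C (max n n')).1 with hb
  have hbm : b ∈ cube (C (max n n')).1 (C (max n n')).2 := self_mem_cube _ _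
  have e1 : b m = (C n).1 m := chain_subset hdec (le_max_left n n') hbm m h1
  have e2 : b m = (C n').1 m := chain_subset hdec (le_max_right n n') hbm m h2
  rw [← e1, e2]

lemma limit_cube (hdec : ∀ n, cube (C (n+1)).1 (C (n+1)).2 ⊆ cube (C n).1 (C n).2)
    (S : Set ℕ) (hS : ∀ n, S ⊆ (C n).2) :
    ∃ y, ∀ n, cube y S ⊆ cube (C n).1 (C n).2 := by
  refine ⟨fun m => if h : ∃ n, m ∉ (C n).2 then (C h.choose).1 m else false, fun n a ha m hm => ?_⟩
  have hmS : m ∉ S := fun hms => hm (hS n hms)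
  rw [ha m hmS]
  have hex : ∃ n, m ∉ (C n).2 := ⟨n, hm⟩
  simp only []
  rw [dif_pos hex]
  exact chain_cons hdec hex.choose_spec hm

end Chain

lemma union_infinite {B : ℕ → Finset ℕ} (hmono : ∀ n, B n ⊆ B (n+1))
    (hcard : ∀ n, n ≤ (B n).card) : (⋃ n, (B n : Set ℕ)).Infinite := by
  intro hfin
  have hsub : ∀ n, B n ⊆ hfin.toFinset := by
    intro n m hm
    rw [Set.Finite.mem_toFinset]
    exact Set.mem_iUnion.mpr ⟨n, hm⟩
  have := Finset.card_le_card (hsub (hfin.toFinset.card + 1))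
  have := hcard (hfin.toFinset.card + 1)
  omega

lemma mono_chain {B : ℕ → Finset ℕ} (hmono : ∀ n, B n ⊆ B (n+1)) {n m : ℕ} (h : n ≤ m) :
    B n ⊆ B m := by
  induction m with
  | zero => rw [Nat.le_zero.mp h]
  | succ m ih =>
    rcases Nat.le_succ_iff_eq_or_le.mp h with rfl | h'
    · rfl
    · exact le_trans (ih h') (hmono m)



/-! ### Case II: constancy -/

variable {f : (ℕ → Bool) → (ℕ → Bool)}

structure St2 (f : (ℕ → Bool) → (ℕ → Bool)) (x : ℕ → Bool) (I : Set ℕ) where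
  z : ℕ → Bool
  J : Set ℕ
  B : Finset ℕ
  hInf : J.Infinite
  hsub : cube z J ⊆ cube x I
  hBI : ↑B ⊆ J
  hnull : ∀ k ∈ B, ∀ a ∈ cube z J, f a = f (flip1 k a)

lemma blind {z : ℕ → Bool} {J : Set ℕ} {B : Finset ℕ} (hBI : (↑B : Set ℕ) ⊆ J)
    (hnull : ∀ k ∈ B, ∀ a ∈ cube z J, f a = f (flip1 k a)) :
    ∀ q : Finset ℕ, ↑q ⊆ (↑B : Set ℕ) → ∀ a ∈ cube z J,
      f (flipF q a) = f a ∧ flipF q a ∈ cube z J := by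
  intro q
  induction q using Finset.induction_on with
  | empty =>
    intro _ a ha
    rw [flipF_empty]
    exact ⟨rfl, ha⟩
  | @insert j s hjs ih =>
    intro hsub a ha
    have hjB : j ∈ B := by exact_mod_cast hsub (Finset.mem_insert_self j s)
    have hsB : ↑s ⊆ (↑B : Set ℕ) := fun m hm => hsub (Finset.mem_insert_of_mem (by exact_mod_cast hm))
    obtain ⟨he, hm⟩ := ih hsB a ha
    rw [flipF_insert hjs]
    constructor
    · rw [← hnull j hjB _ hm]
      exact he
    · exact flip1_mem_cube hm (hBI hjB)

lemma st2_step {x : ℕ → Bool} {I : Set ℕ}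
    (hP : ∀ x' I', I'.Infinite → cube x' I' ⊆ cube x I →
      ∃ z J k, J.Infinite ∧ k ∈ J ∧ cube z J ⊆ cube x' I' ∧
        ∀ a ∈ cube z J, f a = f (flip1 k a))
    (s : St2 f x I) :
    ∃ t : St2 f x I, cube t.z t.J ⊆ cube s.z s.J ∧ s.B ⊆ t.B ∧ t.B.card = s.B.card + 1 := by
  have hXinf : (s.J \ ↑s.B).Infinite := s.hInf.diff (s.B.finite_toSet)
  have hXsub : cube s.z (s.J \ ↑s.B) ⊆ cube x I :=
    le_trans (cube_mono_free Set.diff_subset) s.hsub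
  obtain ⟨z, J, k, hJinf, hkJ, hsubX, hnullk⟩ := hP s.z (s.J \ ↑s.B) hXinf hXsub
  have hJdiff : J ⊆ s.J \ ↑s.B := cube_free_subset hsubX
  have hkB : k ∉ s.B := fun h => (hJdiff hkJ).2 (by exact_mod_cast h)
  have hsub2 : cube z (J ∪ ↑s.B) ⊆ cube s.z s.J := by
    intro a ha m hm
    have hmJB : m ∉ J ∪ ↑s.B := by
      intro hmem
      rcases hmem with h | h
      · exact hm (hJdiff h).1
      · exact hm (s.hBI h)
    rw [ha m hmJB]
    exact hsubX (self_mem_cube z J) m (fun hc => hm hc.1)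
  have hsub2' : ∀ a ∈ cube z (J ∪ ↑s.B), a ∈ cube s.z s.J := fun a ha => hsub2 ha
  have hnullnew : ∀ j ∈ insert k s.B, ∀ a ∈ cube z (J ∪ ↑s.B), f a = f (flip1 j a) := by
    intro j hj a ha
    rcases Finset.mem_insert.mp hj with rfl | hjB
    · -- the saturation argument for the new coordinate
      set a0 : ℕ → Bool := fun m => if m ∈ s.B then z m else a m with ha0def
      have ha0J : a0 ∈ cube z J := by
        intro m hm
        by_cases hmB : m ∈ s.B
        · simp [ha0def, hmB]
        · have : m ∉ J ∪ ↑s.B := by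
            intro hmem
            rcases hmem with h | h
            · exact hm h
            · exact hmB (by exact_mod_cast h)
          simp only [ha0def]
          rw [if_neg hmB]
          exact ha m this
      have ha0C : a0 ∈ cube s.z s.J := hsub2' _ (cube_mono_free Set.subset_union_left ha0J)
      set p := s.B.filter (fun m => a m ≠ z m) with hpdef
      have hpB : ↑p ⊆ (↑s.B : Set ℕ) := by
        intro m hm
        exact_mod_cast Finset.filter_subset _ _ (by exact_mod_cast hm)
      have hkp : j ∉ p := fun h => hkB (Finset.filter_subset _ _ h)
      have hpa : flipF p a0 = a := by
        funext m
        by_cases hmp : m ∈ p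
        · rw [flipF_mem _ hmp]
          have hmB : m ∈ s.B := Finset.filter_subset _ _ hmp
          have hne : a m ≠ z m := (Finset.mem_filter.mp hmp).2
          simp only [ha0def]
          rw [if_pos hmB]
          exact (bool_eq_not hne).symm ▸ rfl
        · rw [flipF_notMem _ hmp]
          by_cases hmB : m ∈ s.B
          · have : ¬ a m ≠ z m := fun hne => hmp (Finset.mem_filter.mpr ⟨hmB, hne⟩)
            simp only [ha0def]
            rw [if_pos hmB]
            exact (not_not.mp this).symm
          · simp [ha0def, hmB]
      have hBL := blind (f := f) s.hBI s.hnull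
      have h1 : f a = f a0 := by
        rw [← hpa]
        exact (hBL p hpB a0 ha0C).1
      have h2 : f (flip1 j a) = f (flip1 j a0) := by
        rw [← hpa, flip1_flipF_comm hkp]
        have hfa0 : flip1 j a0 ∈ cube s.z s.J :=
          hsub2' _ (cube_mono_free Set.subset_union_left (flip1_mem_cube ha0J hkJ))
        exact (hBL p hpB _ hfa0).1
      rw [h1, h2]
      exact hnullk a0 ha0J
    · exact s.hnull j hjB a (hsub2' a ha)
  refine ⟨⟨z, J ∪ ↑s.B, insert k s.B, hJinf.mono Set.subset_union_left,
    le_trans hsub2 s.hsub, ?_, hnullnew⟩, hsub2, Finset.subset_insert _ _,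
    Finset.card_insert_of_notMem hkB⟩
  · intro m hm
    rcases Finset.mem_insert.mp (by exact_mod_cast hm) with rfl | h
    · exact Or.inl hkJ
    · exact Or.inr (by exact_mod_cast h)

lemma constant_case (hf : Continuous f) {x : ℕ → Bool} {I : Set ℕ} (hI : I.Infinite)
    (hP : ∀ x' I', I'.Infinite → cube x' I' ⊆ cube x I →
      ∃ z J k, J.Infinite ∧ k ∈ J ∧ cube z J ⊆ cube x' I' ∧
        ∀ a ∈ cube z J, f a = f (flip1 k a)) :
    ∃ y J, J ⊆ I ∧ J.Infinite ∧ cube y J ⊆ cube x I ∧ ∃ c, ∀ a ∈ cube y J, f a = c := by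
  let s0 : St2 f x I :=
    ⟨x, I, ∅, hI, le_refl _, by simp, fun k hk => absurd hk (Finset.notMem_empty k)⟩
  let seq : ℕ → St2 f x I := fun n => Nat.rec s0 (fun _ s => (st2_step hP s).choose) n
  have hseq : ∀ n, seq (n+1) = (st2_step hP (seq n)).choose := fun n => rfl
  have hspec : ∀ n, cube (seq (n+1)).z (seq (n+1)).J ⊆ cube (seq n).z (seq n).J ∧
      (seq n).B ⊆ (seq (n+1)).B ∧ (seq (n+1)).B.card = (seq n).B.card + 1 := by
    intro n
    rw [hseq n]
    exact (st2_step hP (seq n)).choose_spec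
  set C : ℕ → (ℕ → Bool) × Set ℕ := fun n => ((seq n).z, (seq n).J) with hCdef
  have hdec : ∀ n, cube (C (n+1)).1 (C (n+1)).2 ⊆ cube (C n).1 (C n).2 := fun n => (hspec n).1
  have hBmono : ∀ n, (seq n).B ⊆ (seq (n+1)).B := fun n => (hspec n).2.1
  have hcard : ∀ n, (seq n).B.card = n := by
    intro n
    induction n with
    | zero => rfl
    | succ n ih => rw [(hspec n).2.2, ih]
  set S : Set ℕ := ⋃ n, ((seq n).B : Set ℕ) with hSdef
  have hSinf : S.Infinite := union_infinite hBmono (fun n => le_of_eq (hcard n).symm)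
  have hfreemono : ∀ {n m : ℕ}, n ≤ m → (seq m).J ⊆ (seq n).J :=
    fun h => cube_free_subset (chain_subset hdec h)
  have hS : ∀ n, S ⊆ (C n).2 := by
    intro n m hm
    obtain ⟨j, hj⟩ := Set.mem_iUnion.mp hm
    rcases le_total j n with h | h
    · exact (seq n).hBI (by exact_mod_cast mono_chain hBmono h (by exact_mod_cast hj))
    · exact hfreemono h ((seq j).hBI hj)
  obtain ⟨y, hy⟩ := limit_cube hdec S hS
  have hy0 : cube y S ⊆ cube x I := hy 0
  have hnullS : ∀ k ∈ S, ∀ a ∈ cube y S, f a = f (flip1 k a) := by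
    intro k hk a ha
    obtain ⟨j, hj⟩ := Set.mem_iUnion.mp hk
    exact (seq j).hnull k hj a (hy j ha)
  refine ⟨y, S, hS 0, hSinf, hy0, f y, ?_⟩
  intro b hb
  funext n
  obtain ⟨M, hM⟩ := modulus hf b n
  set p := (Finset.range M).filter (fun m => m ∈ S ∧ y m ≠ b m) with hpdef
  have hpS : ↑p ⊆ S := by
    intro m hm
    have hm' : m ∈ p := by exact_mod_cast hm
    rw [hpdef] at hm'
    exact (Finset.mem_filter.mp hm').2.1
  set b' := flipF p y with hb'def
  have hb'S : b' ∈ cube y S := flipF_mem_cube (self_mem_cube y S) hpS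
  have hagree : ∀ m < M, b' m = b m := by
    intro m hm
    by_cases hmp : m ∈ p
    · rw [hb'def, flipF_mem _ hmp]
      have hne : y m ≠ b m := ((Finset.mem_filter.mp hmp).2).2
      exact (bool_eq_not (Ne.symm hne)).symm
    · rw [hb'def, flipF_notMem _ hmp]
      by_cases hmS : m ∈ S
      · have : ¬ (m ∈ S ∧ y m ≠ b m) := fun hc => hmp
          (Finset.mem_filter.mpr ⟨Finset.mem_range.mpr hm, hc⟩)
        push_neg at this
        exact this hmS
      · exact (hb m hmS).symm
  have h1 : f b' n = f b n := hM b' hagree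
  have h2 : f b' = f y :=
    (blind (f := f) (z := y) (J := S) hpS
      (fun k hk a ha => hnullS k (hpS hk) a ha) p (le_refl _) y (self_mem_cube y S)).1
  rw [← h1, h2]


/-! ### Case I: injectivity -/

lemma flipF_flip1_toggle (τ : Finset ℕ) (j : ℕ) (a : ℕ → Bool) :
    flipF τ (flip1 j a) = flipF (if j ∈ τ then τ.erase j else insert j τ) a := by
  funext m
  by_cases hjτ : j ∈ τ <;> by_cases hm : m = j
  · subst hm; simp [flipF, flip1, hjτ]
  · by_cases hmτ : m ∈ τ <;> simp [flipF, flip1, hjτ, hm, hmτ, Finset.mem_erase]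
  · subst hm; simp [flipF, flip1, hjτ]
  · by_cases hmτ : m ∈ τ <;> simp [flipF, flip1, hjτ, hm, hmτ, Finset.mem_insert]

lemma flipF_toggle_flip1 (τ : Finset ℕ) (j : ℕ) (a : ℕ → Bool) :
    flipF (if j ∈ τ then τ.erase j else insert j τ) (flip1 j a) = flipF τ a := by
  funext m
  by_cases hjτ : j ∈ τ <;> by_cases hm : m = j
  · subst hm; simp [flipF, flip1, hjτ, Finset.mem_erase]
  · by_cases hmτ : m ∈ τ <;> simp [flipF, flip1, hjτ, hm, hmτ, Finset.mem_erase]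
  · subst hm; simp [flipF, flip1, hjτ, Finset.mem_insert]
  · by_cases hmτ : m ∈ τ <;> simp [flipF, flip1, hjτ, hm, hmτ, Finset.mem_insert]

lemma Zt_closed (hf : Continuous f) (τ : Finset ℕ) (k : ℕ) {a : ℕ → Bool}
    (ha : f (flipF τ a) ≠ f (flip1 k (flipF τ a))) :
    ∃ M, ∀ b, (∀ m < M, b m = a m) → f (flipF τ b) ≠ f (flip1 k (flipF τ b)) := by
  obtain ⟨n, hn⟩ := Function.ne_iff.mp ha
  obtain ⟨M1, hM1⟩ := modulus hf (flipF τ a) n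
  obtain ⟨M2, hM2⟩ := modulus hf (flip1 k (flipF τ a)) n
  refine ⟨max M1 M2, fun b hb heq => ?_⟩
  have h1 : ∀ m < M1, flipF τ b m = flipF τ a m := by
    intro m hm
    simp only [flipF]
    rw [hb m (lt_of_lt_of_le hm (le_max_left _ _))]
  have h2 : ∀ m < M2, flip1 k (flipF τ b) m = flip1 k (flipF τ a) m := by
    intro m hm
    simp only [flip1, flipF]
    rw [hb m (lt_of_lt_of_le hm (le_max_right _ _))]
  have e1 := hM1 _ h1
  have e2 := hM2 _ h2
  apply hn
  rw [← e1, ← e2, heq]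

lemma extract_null (hf : Continuous f) {k : ℕ} (𝒯 : Finset (Finset ℕ))
    (hkτ : ∀ τ ∈ 𝒯, k ∉ τ) :
    ∀ (y : ℕ → Bool) (J : Set ℕ), J.Infinite → k ∈ J →
    (∀ a ∈ cube y J, ∃ τ ∈ 𝒯, f (flipF τ a) = f (flip1 k (flipF τ a))) →
    ∃ τ ∈ 𝒯, ∃ z J', J'.Infinite ∧ k ∈ J' ∧ cube z J' ⊆ cube y J ∧
      ∀ a ∈ cube z J', f (flipF τ a) = f (flip1 k (flipF τ a)) := by
  induction 𝒯 using Finset.induction_on with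
  | empty =>
    intro y J _ _ hcov
    obtain ⟨τ, hτ, -⟩ := hcov y (self_mem_cube y J)
    exact absurd hτ (Finset.notMem_empty τ)
  | @insert τ0 𝒯 hτ0 ih =>
    intro y J hJ hkJ hcov
    have hkτ0 : k ∉ τ0 := hkτ τ0 (Finset.mem_insert_self _ _)
    have hG : ↑({k} : Finset ℕ) ⊆ J := by
      intro m hm
      have hmk : m = k := by simpa using hm
      rw [hmk]; exact hkJ
    set Z : Set (ℕ → Bool) := {a | f (flipF τ0 a) = f (flip1 k (flipF τ0 a))} with hZdef
    have hcl : ∀ a ∉ Z, ∃ M, ∀ b, (∀ m < M, b m = a m) → b ∉ Z := by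
      intro a ha
      obtain ⟨M, hM⟩ := Zt_closed hf τ0 k ha
      exact ⟨M, fun b hb => hM b hb⟩
    have hinv : ∀ a ∈ Z, ∀ j ∈ ({k} : Finset ℕ), flip1 j a ∈ Z := by
      intro a ha j hj
      have hjk : j = k := by simpa using hj
      subst hjk
      show f (flipF τ0 (flip1 j a)) = f (flip1 j (flipF τ0 (flip1 j a)))
      rw [← flip1_flipF_comm hkτ0, flip1_flip1]
      exact ha.symm
    rcases avoid_or_inside hJ hG hcl hinv with hins | ⟨z, J', hJ'inf, hGJ', hsubJ, hav⟩
    · exact ⟨τ0, Finset.mem_insert_self _ _, y, J, hJ, hkJ, le_refl _,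
        fun a ha => hins ha⟩
    · have hkJ' : k ∈ J' := hGJ' (by simp)
      have hcov' : ∀ a ∈ cube z J', ∃ τ ∈ 𝒯, f (flipF τ a) = f (flip1 k (flipF τ a)) := by
        intro a ha
        obtain ⟨τ, hτmem, hτeq⟩ := hcov a (hsubJ ha)
        rcases Finset.mem_insert.mp hτmem with rfl | hτ𝒯
        · exact absurd hτeq (hav a ha)
        · exact ⟨τ, hτ𝒯, hτeq⟩
      obtain ⟨τ, hτ𝒯, z2, J2, h1, h2, h3, h4⟩ :=
        ih (fun τ hτ => hkτ τ (Finset.mem_insert_of_mem hτ)) z J' hJ'inf hkJ' hcov'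
      exact ⟨τ, Finset.mem_insert_of_mem hτ𝒯, z2, J2, h1, h2, le_trans h3 hsubJ, h4⟩

structure St1 (f : (ℕ → Bool) → (ℕ → Bool)) (xs : ℕ → Bool) (Is : Set ℕ) where
  y : ℕ → Bool
  J : Set ℕ
  F : Finset ℕ
  N : ℕ
  hInf : J.Infinite
  hsub : cube y J ⊆ cube xs Is
  hFJ : ↑F ⊆ J
  hdet : ∀ a ∈ cube y J, ∀ b ∈ cube y J, (∀ j ∈ F, a j = b j) → ∀ m < N, f a m = f b m
  hsep : ∀ a ∈ cube y J, ∀ b ∈ cube y J, (∃ j ∈ F, a j ≠ b j) → ∃ m < N, f a m ≠ f b m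

lemma st1_step (hf : Continuous f) {xs : ℕ → Bool} {Is : Set ℕ}
    (hQ : ∀ z J k, J.Infinite → k ∈ J → cube z J ⊆ cube xs Is →
      ¬(∀ a ∈ cube z J, f a = f (flip1 k a)))
    (s : St1 f xs Is) :
    ∃ t : St1 f xs Is, cube t.y t.J ⊆ cube s.y s.J ∧ s.F ⊆ t.F ∧
      t.F.card = s.F.card + 1 := by
  obtain ⟨k, hk⟩ := (s.hInf.diff (s.F.finite_toSet)).nonempty
  have hkJ : k ∈ s.J := hk.1
  have hkF : k ∉ s.F := fun h => hk.2 (by exact_mod_cast h)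
  set G : Finset ℕ := insert k s.F with hGdef
  have hGJ : ↑G ⊆ s.J := by
    intro m hm
    rcases Finset.mem_insert.mp (by exact_mod_cast hm) with rfl | h
    · exact hkJ
    · exact s.hFJ (by exact_mod_cast h)
  set W : Set (ℕ → Bool) :=
    {a | ∃ τ ∈ s.F.powerset, f (flipF τ a) = f (flip1 k (flipF τ a))} with hWdef
  have hcl : ∀ a ∉ W, ∃ M, ∀ b, (∀ m < M, b m = a m) → b ∉ W := by
    intro a ha
    have hane : ∀ τ ∈ s.F.powerset, f (flipF τ a) ≠ f (flip1 k (flipF τ a)) := by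
      intro τ hτ heq
      exact ha ⟨τ, hτ, heq⟩
    obtain ⟨M, hM⟩ := finset_bound s.F.powerset
      (fun τ M => ∀ b, (∀ m < M, b m = a m) → f (flipF τ b) ≠ f (flip1 k (flipF τ b)))
      (by
        intro τ M M' hle hq b hb
        exact hq b (fun m hm => hb m (lt_of_lt_of_le hm hle)))
      (fun τ hτ => Zt_closed hf τ k (hane τ hτ))
    refine ⟨M, fun b hb hbW => ?_⟩
    obtain ⟨τ, hτ, heq⟩ := hbW
    exact hM τ hτ b hb heq
  have hinv : ∀ a ∈ W, ∀ j ∈ G, flip1 j a ∈ W := by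
    intro a ha j hj
    obtain ⟨τ, hτ, heq⟩ := ha
    have hτF : τ ⊆ s.F := Finset.mem_powerset.mp hτ
    have hkτ : k ∉ τ := fun h => hkF (hτF h)
    rcases Finset.mem_insert.mp hj with rfl | hjF
    · refine ⟨τ, hτ, ?_⟩
      rw [← flip1_flipF_comm hkτ, flip1_flip1]
      exact heq.symm
    · refine ⟨if j ∈ τ then τ.erase j else insert j τ, ?_, ?_⟩
      · by_cases h : j ∈ τ
        · rw [if_pos h]
          exact Finset.mem_powerset.mpr (le_trans (Finset.erase_subset _ _) hτF)
        · rw [if_neg h]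
          exact Finset.mem_powerset.mpr (Finset.insert_subset_iff.mpr ⟨hjF, hτF⟩)
      · rw [flipF_toggle_flip1]
        exact heq
  rcases avoid_or_inside s.hInf hGJ hcl hinv with hins | ⟨y2, J2, hJ2inf, hGJ2, hsubJ2, hav⟩
  · -- inside W: extract a null cube and contradict hQ
    exfalso
    have hkτ : ∀ τ ∈ s.F.powerset, k ∉ τ :=
      fun τ hτ h => hkF (Finset.mem_powerset.mp hτ h)
    obtain ⟨τ, hτmem, z, J', hJ'inf, hkJ', hsubzJ, hnull'⟩ :=
      extract_null hf s.F.powerset hkτ s.y s.J s.hInf hkJ (fun a ha => hins ha)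
    have hτF : τ ⊆ s.F := Finset.mem_powerset.mp hτmem
    have hJ'J : J' ⊆ s.J := cube_free_subset hsubzJ
    have hJIs : s.J ⊆ Is := cube_free_subset s.hsub
    have hzC : z ∈ cube xs Is := s.hsub (hsubzJ (self_mem_cube z J'))
    have hsub' : cube (flipF τ z) J' ⊆ cube xs Is := by
      intro b hb m hm
      have hmJ' : m ∉ J' := fun h => hm (hJIs (hJ'J h))
      have hmτ : m ∉ τ := fun h => hm (hJIs (s.hFJ (by exact_mod_cast hτF h)))
      rw [hb m hmJ', flipF_notMem _ hmτ]
      exact hzC m hm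
    refine hQ (flipF τ z) J' k hJ'inf hkJ' hsub' ?_
    intro b hb
    have hb2 : flipF τ b ∈ cube z J' := by
      intro m hm
      by_cases hmτ : m ∈ τ
      · rw [flipF_mem _ hmτ, hb m hm, flipF_mem _ hmτ, Bool.not_not]
      · rw [flipF_notMem _ hmτ, hb m hm, flipF_notMem _ hmτ]
    have := hnull' (flipF τ b) hb2
    rwa [flipF_flipF] at this
  · -- avoidance: the injectivity step
    have hGJ2' : (↑G : Set ℕ) ⊆ J2 := hGJ2
    have HA : ∀ a ∈ cube y2 J2, f a ≠ f (flip1 k a) := by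
      intro a ha heq
      exact hav a ha ⟨∅, Finset.mem_powerset.mpr (Finset.empty_subset _), by
        rw [flipF_empty]; exact heq⟩
    set d : Finset ℕ → ℕ := fun τ =>
      if h : f (flipF τ y2) = f (flip1 k (flipF τ y2)) then 0
      else (Function.ne_iff.mp h).choose with hddef
    have hcmem : ∀ τ ∈ G.powerset, flipF τ y2 ∈ cube y2 J2 := by
      intro τ hτ
      exact flipF_mem_cube (self_mem_cube _ _)
        (le_trans (by exact_mod_cast Finset.mem_powerset.mp hτ) hGJ2')
    have hd : ∀ τ ∈ G.powerset, f (flipF τ y2) (d τ) ≠ f (flip1 k (flipF τ y2)) (d τ) := by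
      intro τ hτ
      have hne := HA _ (hcmem τ hτ)
      simp only [hddef]
      rw [dif_neg hne]
      exact (Function.ne_iff.mp hne).choose_spec
    set N' : ℕ := max s.N ((G.powerset.sup d) + 1) with hN'def
    have hdN : ∀ τ ∈ G.powerset, d τ < N' := by
      intro τ hτ
      exact lt_of_lt_of_le (Nat.lt_succ_of_le (Finset.le_sup hτ)) (le_max_right _ _)
    obtain ⟨M0, hM0⟩ := finset_bound G.powerset
      (fun τ M => ∀ b, (∀ m < M, b m = flipF τ y2 m) → ∀ n < N', f b n = f (flipF τ y2) n)
      (by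
        intro τ M M' hle hq b hb
        exact hq b (fun m hm => hb m (lt_of_lt_of_le hm hle)))
      (fun τ _ => modulusN hf (flipF τ y2) N')
    set M : ℕ := max M0 ((G.sup id) + 1) with hMdef
    have hGM : ∀ j ∈ G, j < M :=
      fun j hj => lt_of_lt_of_le (Nat.lt_succ_of_le (Finset.le_sup (f := id) hj)) (le_max_right _ _)
    set I' : Set ℕ := (J2 \ {m | m < M}) ∪ ↑G with hI'def
    have hI'inf : I'.Infinite := (hJ2inf.diff (Set.finite_lt_nat M)).mono Set.subset_union_left
    have hsubnew : cube y2 I' ⊆ cube y2 J2 := by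
      intro a ha m hm
      refine ha m ?_
      intro hmem
      rcases hmem with h | h
      · exact hm h.1
      · exact hm (hGJ2' h)
    have hchain : cube y2 I' ⊆ cube s.y s.J := le_trans hsubnew hsubJ2
    have htau : ∀ a ∈ cube y2 I', ∀ m < M,
        a m = flipF (G.filter (fun j => a j ≠ y2 j)) y2 m := by
      intro a ha m hm
      by_cases hmG : m ∈ G
      · by_cases hne : a m ≠ y2 m
        · rw [flipF_mem _ (Finset.mem_filter.mpr ⟨hmG, hne⟩)]
          exact bool_eq_not hne
        · rw [flipF_notMem (s := G.filter (fun j => a j ≠ y2 j)) _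
            (fun h => hne (Finset.mem_filter.mp h).2)]
          exact not_not.mp hne
      · have hmI' : m ∉ I' := by
          intro hmem
          rcases hmem with h | h
          · exact h.2 hm
          · exact hmG (by exact_mod_cast h)
        rw [ha m hmI', flipF_notMem (s := G.filter (fun j => a j ≠ y2 j)) _
          (fun h => hmG (Finset.filter_subset _ _ h))]
    have hfilmem : ∀ a : ℕ → Bool, G.filter (fun j => a j ≠ y2 j) ∈ G.powerset :=
      fun a => Finset.mem_powerset.mpr (Finset.filter_subset _ _)
    have hprefix : ∀ a ∈ cube y2 I', ∀ n < N',
        f a n = f (flipF (G.filter (fun j => a j ≠ y2 j)) y2) n := by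
      intro a ha n hn
      exact hM0 _ (hfilmem a) a
        (fun m hm => htau a ha m (lt_of_lt_of_le hm (le_max_left _ _))) n hn
    refine ⟨⟨y2, I', G, N', hI'inf, le_trans hchain s.hsub, Set.subset_union_right,
      ?_, ?_⟩, le_trans hsubnew hsubJ2, Finset.subset_insert _ _,
      Finset.card_insert_of_notMem hkF⟩
    · -- hdet
      intro a ha b hb hsame n hn
      have hfil : G.filter (fun j => a j ≠ y2 j) = G.filter (fun j => b j ≠ y2 j) := by
        apply Finset.ext
        intro m
        simp only [Finset.mem_filter]
        constructor
        · rintro ⟨hmG, hne⟩; exact ⟨hmG, by rw [← hsame m hmG]; exact hne⟩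
        · rintro ⟨hmG, hne⟩; exact ⟨hmG, by rw [hsame m hmG]; exact hne⟩
      rw [hprefix a ha n hn, hprefix b hb n hn, hfil]
    · -- hsep
      intro a ha b hb hex
      by_cases hexF : ∃ j ∈ s.F, a j ≠ b j
      · obtain ⟨m, hm, hne⟩ := s.hsep a (hchain ha) b (hchain hb) hexF
        exact ⟨m, lt_of_lt_of_le hm (le_max_left _ _), hne⟩
      · push_neg at hexF
        obtain ⟨j, hjG, hjne⟩ := hex
        have hjk : j = k := by
          rcases Finset.mem_insert.mp hjG with h | h
          · exact h
          · exact absurd (hexF j h) hjne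
        have hjne' : a k ≠ b k := hjk ▸ hjne
        have hflip : flipF (G.filter (fun j' => b j' ≠ y2 j')) y2
            = flip1 k (flipF (G.filter (fun j' => a j' ≠ y2 j')) y2) := by
          funext m
          by_cases hmj : m = k
          · rw [hmj, flip1_self]
            have hmG : k ∈ G := Finset.mem_insert_self _ _
            by_cases haj : a k = y2 k
            · have hbj : b k ≠ y2 k := fun h => hjne' (haj.trans h.symm)
              rw [flipF_mem _ (Finset.mem_filter.mpr ⟨hmG, hbj⟩),
                flipF_notMem (s := G.filter (fun j' => a j' ≠ y2 j')) _
                  (fun h => (Finset.mem_filter.mp h).2 haj)]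
            · have hbj : b k = y2 k := by
                have h1 := bool_eq_not haj
                have h2 := bool_eq_not (fun h : b k = a k => hjne' h.symm)
                rw [h2, h1, Bool.not_not]
              rw [flipF_notMem (s := G.filter (fun j' => b j' ≠ y2 j')) _
                  (fun h => (Finset.mem_filter.mp h).2 hbj),
                flipF_mem _ (Finset.mem_filter.mpr ⟨hmG, haj⟩), Bool.not_not]
          · rw [flip1_ne _ _ hmj]
            by_cases hmG : m ∈ G
            · have hmF : m ∈ s.F := by
                rcases Finset.mem_insert.mp hmG with h | h
                · exact absurd h hmj
                · exact h
              have hab : a m = b m := hexF m hmF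
              by_cases hne : a m = y2 m
              · rw [flipF_notMem (s := G.filter (fun j' => b j' ≠ y2 j')) _
                    (fun h => (Finset.mem_filter.mp h).2 (hab ▸ hne)),
                  flipF_notMem (s := G.filter (fun j' => a j' ≠ y2 j')) _
                    (fun h => (Finset.mem_filter.mp h).2 hne)]
              · rw [flipF_mem _ (Finset.mem_filter.mpr ⟨hmG, fun h => hne (hab.trans h)⟩),
                  flipF_mem _ (Finset.mem_filter.mpr ⟨hmG, hne⟩)]
            · rw [flipF_notMem (s := G.filter (fun j' => b j' ≠ y2 j')) _
                  (fun h => hmG (Finset.filter_subset _ _ h)),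
                flipF_notMem (s := G.filter (fun j' => a j' ≠ y2 j')) _
                  (fun h => hmG (Finset.filter_subset _ _ h))]
        have hτaP := hfilmem a
        refine ⟨d (G.filter (fun j' => a j' ≠ y2 j')), hdN _ hτaP, ?_⟩
        intro hcon
        rw [hprefix a ha _ (hdN _ hτaP), hprefix b hb _ (hdN _ hτaP), hflip] at hcon
        exact hd _ hτaP hcon


lemma injective_case (hf : Continuous f) {xs : ℕ → Bool} {Is : Set ℕ} (hIs : Is.Infinite)
    (hQ : ∀ z J k, J.Infinite → k ∈ J → cube z J ⊆ cube xs Is →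
      ¬(∀ a ∈ cube z J, f a = f (flip1 k a))) :
    ∃ y S, S ⊆ Is ∧ S.Infinite ∧ cube y S ⊆ cube xs Is ∧ Set.InjOn f (cube y S) := by
  let s0 : St1 f xs Is := ⟨xs, Is, ∅, 0, hIs, le_refl _, by simp,
    fun a _ b _ _ m hm => absurd hm (Nat.not_lt_zero m),
    fun a _ b _ hex => absurd hex (by simp)⟩
  let seq : ℕ → St1 f xs Is := fun n => Nat.rec s0 (fun _ s => (st1_step hf hQ s).choose) n
  have hseq : ∀ n, seq (n+1) = (st1_step hf hQ (seq n)).choose := fun n => rfl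
  have hspec : ∀ n, cube (seq (n+1)).y (seq (n+1)).J ⊆ cube (seq n).y (seq n).J ∧
      (seq n).F ⊆ (seq (n+1)).F ∧ (seq (n+1)).F.card = (seq n).F.card + 1 := by
    intro n
    rw [hseq n]
    exact (st1_step hf hQ (seq n)).choose_spec
  set C : ℕ → (ℕ → Bool) × Set ℕ := fun n => ((seq n).y, (seq n).J) with hCdef
  have hdec : ∀ n, cube (C (n+1)).1 (C (n+1)).2 ⊆ cube (C n).1 (C n).2 := fun n => (hspec n).1
  have hFmono : ∀ n, (seq n).F ⊆ (seq (n+1)).F := fun n => (hspec n).2.1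
  have hcard : ∀ n, (seq n).F.card = n := by
    intro n
    induction n with
    | zero => rfl
    | succ n ih => rw [(hspec n).2.2, ih]
  set S : Set ℕ := ⋃ n, ((seq n).F : Set ℕ) with hSdef
  have hSinf : S.Infinite := union_infinite hFmono (fun n => le_of_eq (hcard n).symm)
  have hfreemono : ∀ {n m : ℕ}, n ≤ m → (seq m).J ⊆ (seq n).J :=
    fun h => cube_free_subset (chain_subset hdec h)
  have hS : ∀ n, S ⊆ (C n).2 := by
    intro n m hm
    obtain ⟨j, hj⟩ := Set.mem_iUnion.mp hm
    rcases le_total j n with h | h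
    · exact (seq n).hFJ (by exact_mod_cast mono_chain hFmono h (by exact_mod_cast hj))
    · exact hfreemono h ((seq j).hFJ hj)
  obtain ⟨y, hy⟩ := limit_cube hdec S hS
  refine ⟨y, S, hS 0, hSinf, hy 0, ?_⟩
  intro a ha b hb hfab
  by_contra hne
  obtain ⟨m, hm⟩ := Function.ne_iff.mp hne
  have hmS : m ∈ S := by
    by_contra hmS
    exact hm ((ha m hmS).trans (hb m hmS).symm)
  obtain ⟨j, hj⟩ := Set.mem_iUnion.mp hmS
  obtain ⟨n0, _, hn0⟩ := (seq j).hsep a (hy j ha) b (hy j hb) ⟨m, by exact_mod_cast hj, hm⟩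
  exact hn0 (by rw [hfab])

lemma cube_main (hf : Continuous f) (x : ℕ → Bool) (I : Set ℕ) (hI : I.Infinite) :
    ∃ y J, J ⊆ I ∧ J.Infinite ∧ cube y J ⊆ cube x I ∧
      (Set.InjOn f (cube y J) ∨ ∃ c, ∀ a ∈ cube y J, f a = c) := by
  by_cases hP : ∀ x' I', I'.Infinite → cube x' I' ⊆ cube x I →
      ∃ z J k, J.Infinite ∧ k ∈ J ∧ cube z J ⊆ cube x' I' ∧
        ∀ a ∈ cube z J, f a = f (flip1 k a)
  · obtain ⟨y, J, h1, h2, h3, hc⟩ := constant_case hf hI hP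
    exact ⟨y, J, h1, h2, h3, Or.inr hc⟩
  · push_neg at hP
    obtain ⟨xs, Is, hIsInf, hsubs, hQ0⟩ := hP
    have hQ : ∀ z J k, J.Infinite → k ∈ J → cube z J ⊆ cube xs Is →
        ¬(∀ a ∈ cube z J, f a = f (flip1 k a)) := by
      intro z J k h1 h2 h3 hall
      obtain ⟨a, ha, hne⟩ := hQ0 z J k h1 h2 h3
      exact hne (hall a ha)
    obtain ⟨y, S, h1, h2, h3, hinj⟩ := injective_case hf hIsInf hQ
    have hIsI : Is ⊆ I := cube_free_subset hsubs
    exact ⟨y, S, le_trans h1 hIsI, h2, le_trans h3 hsubs, Or.inl hinj⟩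



@[simp] lemma seqTake_length (a : ℕ → Bool) (n : ℕ) : (seqTake a n).length = n := by
  simp [seqTake]

lemma seqTake_getD (a : ℕ → Bool) {m n : ℕ} (h : m < n) :
    (seqTake a n).getD m false = a m := by
  unfold seqTake
  rw [List.getD_eq_getElem _ _ (by simpa using h)]
  simp

lemma seqTake_ext {a b : ℕ → Bool} {n : ℕ} (h : seqTake a n = seqTake b n) :
    ∀ m < n, a m = b m := by
  intro m hm
  rw [← seqTake_getD a hm, h, seqTake_getD b hm]

lemma hLevel_zero (u : ℕ → List Bool) : hLevel u 0 = (u 0).length := by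
  simp [hLevel]

lemma hLevel_succ (u : ℕ → List Bool) (n : ℕ) :
    hLevel u (n+1) = hLevel u n + (u (n+1)).length + 1 := by
  simp [hLevel, Finset.sum_range_succ]
  omega

lemma self_le_hLevel (u : ℕ → List Bool) (n : ℕ) : n ≤ hLevel u n := by
  induction n with
  | zero => exact Nat.zero_le _
  | succ n ih => rw [hLevel_succ]; omega

lemma hLevel_strictMono (u : ℕ → List Bool) : StrictMono (hLevel u) := by
  apply strictMono_nat_of_lt_succ
  intro n
  rw [hLevel_succ]
  omega

lemma silverPrefix_length (u : ℕ → List Bool) (i : ℕ → Bool) (n : ℕ) :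
    (silverPrefix u i n).length = hLevel u n + 1 := by
  induction n with
  | zero => simp [silverPrefix, hLevel_zero]
  | succ n ih => simp [silverPrefix, ih, hLevel_succ]; omega

lemma silverPrefix_prefix (u : ℕ → List Bool) (i : ℕ → Bool) {n m : ℕ} (h : n ≤ m) :
    silverPrefix u i n <+: silverPrefix u i m := by
  induction m with
  | zero => rw [Nat.le_zero.mp h]
  | succ m ih =>
    rcases Nat.le_succ_iff_eq_or_le.mp h with rfl | h'
    · exact List.prefix_refl _
    · refine (ih h').trans ?_
      show silverPrefix u i m <+: silverPrefix u i m ++ u (m+1) ++ [i (m+1)]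
      rw [List.append_assoc]
      exact List.prefix_append _ _

lemma silverPrefix_getD_stable (u : ℕ → List Bool) (i : ℕ → Bool) {n m p : ℕ}
    (h : n ≤ m) (hp : p ≤ hLevel u n) :
    (silverPrefix u i m).getD p false = (silverPrefix u i n).getD p false := by
  obtain ⟨t, ht⟩ := silverPrefix_prefix u i h
  rw [← ht, List.getD_append _ _ _ _ (by rw [silverPrefix_length]; omega)]

lemma silverBranch_eq_prefix (u : ℕ → List Bool) (i : ℕ → Bool) {m n : ℕ}
    (h : m ≤ hLevel u n) :
    silverBranch u i m = (silverPrefix u i n).getD m false := by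
  unfold silverBranch
  rcases le_total m n with hc | hc
  · exact (silverPrefix_getD_stable u i hc (self_le_hLevel u m)).symm
  · exact silverPrefix_getD_stable u i hc h

lemma getD_concat (Q : List Bool) (c : Bool) : (Q ++ [c]).getD Q.length false = c := by
  rw [List.getD_append_right Q [c] false Q.length le_rfl]
  simp

lemma silverBranch_hLevel (u : ℕ → List Bool) (i : ℕ → Bool) (n : ℕ) :
    silverBranch u i (hLevel u n) = i n := by
  rw [silverBranch_eq_prefix u i (le_refl (hLevel u n))]
  cases n with
  | zero =>
    show (u 0 ++ [i 0]).getD (hLevel u 0) false = i 0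
    rw [hLevel_zero]
    exact getD_concat _ _
  | succ n =>
    show (silverPrefix u i n ++ u (n+1) ++ [i (n+1)]).getD (hLevel u (n+1)) false = i (n+1)
    have hlen : (silverPrefix u i n ++ u (n+1)).length = hLevel u (n+1) := by
      simp [silverPrefix_length, hLevel_succ]
      omega
    rw [← hlen]
    exact getD_concat _ _

lemma silverPrefix_indep (u : ℕ → List Bool) (i j : ℕ → Bool) :
    ∀ n p, p ≤ hLevel u n → (∀ r, hLevel u r ≠ p) →
    (silverPrefix u i n).getD p false = (silverPrefix u j n).getD p false := by
  intro n
  induction n with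
  | zero =>
    intro p hp hr
    have hplt : p < (u 0).length := by
      have := hr 0
      rw [hLevel_zero] at *
      omega
    show (u 0 ++ [i 0]).getD p false = (u 0 ++ [j 0]).getD p false
    rw [List.getD_append _ _ _ _ hplt, List.getD_append _ _ _ _ hplt]
  | succ n ih =>
    intro p hp hr
    by_cases hpn : p ≤ hLevel u n
    · rw [silverPrefix_getD_stable u i (Nat.le_succ n) hpn,
        silverPrefix_getD_stable u j (Nat.le_succ n) hpn]
      exact ih p hpn hr
    · push_neg at hpn
      have hplt : p < hLevel u (n+1) := by
        have := hr (n+1)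
        omega
      have hlen : ∀ i' : ℕ → Bool, (silverPrefix u i' n ++ u (n+1)).length = hLevel u (n+1) := by
        intro i'
        simp [silverPrefix_length, hLevel_succ]
        omega
      show (silverPrefix u i n ++ u (n+1) ++ [i (n+1)]).getD p false
        = (silverPrefix u j n ++ u (n+1) ++ [j (n+1)]).getD p false
      rw [List.getD_append (silverPrefix u i n ++ u (n+1)) [i (n+1)] false p
          (by rw [hlen i]; exact hplt),
        List.getD_append (silverPrefix u j n ++ u (n+1)) [j (n+1)] false p
          (by rw [hlen j]; exact hplt)]
      have hlen2 : ∀ i' : ℕ → Bool, (silverPrefix u i' n).length ≤ p := by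
        intro i'
        rw [silverPrefix_length]
        omega
      rw [List.getD_append_right (silverPrefix u i n) (u (n+1)) false p (hlen2 i),
        List.getD_append_right (silverPrefix u j n) (u (n+1)) false p (hlen2 j)]
      rw [silverPrefix_length, silverPrefix_length]

lemma silverBranch_indep (u : ℕ → List Bool) (i j : ℕ → Bool) {p : ℕ}
    (hr : ∀ r, hLevel u r ≠ p) : silverBranch u i p = silverBranch u j p := by
  rw [silverBranch_eq_prefix u i (self_le_hLevel u p),
    silverBranch_eq_prefix u j (self_le_hLevel u p)]
  exact silverPrefix_indep u i j p p (self_le_hLevel u p) hr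

lemma silverBranch_mem_cube (u : ℕ → List Bool) (i : ℕ → Bool) :
    silverBranch u i ∈ cube (silverBranch u (fun _ => false)) (Set.range (hLevel u)) := by
  intro m hm
  exact silverBranch_indep u i (fun _ => false) (fun r hr => hm ⟨r, hr⟩)

lemma cube_mem_branch (u : ℕ → List Bool) {a : ℕ → Bool}
    (ha : a ∈ cube (silverBranch u (fun _ => false)) (Set.range (hLevel u))) :
    a = silverBranch u (fun n => a (hLevel u n)) := by
  funext m
  by_cases hm : ∃ n, hLevel u n = m
  · obtain ⟨n, hn⟩ := hm
    rw [← hn, silverBranch_hLevel]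
  · push_neg at hm
    rw [silverBranch_indep u _ (fun _ => false) hm]
    exact ha m (fun ⟨r, hr⟩ => hm r hr)

lemma branches_eq_cube (u : ℕ → List Bool) :
    branches {s | ∃ i : ℕ → Bool, s = seqTake (silverBranch u i) s.length}
      = cube (silverBranch u (fun _ => false)) (Set.range (hLevel u)) := by
  ext a
  constructor
  · intro ha m hm
    obtain ⟨i, hi⟩ := ha (m + 1)
    rw [seqTake_length] at hi
    have := seqTake_ext hi m (Nat.lt_succ_self m)
    rw [this]
    exact silverBranch_indep u i (fun _ => false) (fun r hr => hm ⟨r, hr⟩)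
  · intro ha n
    refine ⟨fun n => a (hLevel u n), ?_⟩
    rw [seqTake_length, ← cube_mem_branch u ha]



def enumJ (J : Set ℕ) : ℕ → ℕ := Nat.nth (· ∈ J)

def uSdef (y : ℕ → Bool) (J : Set ℕ) : ℕ → List Bool
  | 0 => List.ofFn (fun m : Fin (enumJ J 0) => y m)
  | n+1 => List.ofFn (fun m : Fin (enumJ J (n+1) - enumJ J n - 1) => y (enumJ J n + 1 + m))

variable {J : Set ℕ}

lemma enum_mem (hJ : J.Infinite) (n : ℕ) : enumJ J n ∈ J :=
  Nat.nth_mem_of_infinite hJ n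

lemma enum_lt (hJ : J.Infinite) {n m : ℕ} (h : n < m) : enumJ J n < enumJ J m :=
  (Nat.nth_lt_nth hJ).mpr h

lemma enum_range (hJ : J.Infinite) : Set.range (enumJ J) = J :=
  Nat.range_nth_of_infinite hJ

lemma uS_hLevel (y : ℕ → Bool) (hJ : J.Infinite) (n : ℕ) :
    hLevel (uSdef y J) n = enumJ J n := by
  induction n with
  | zero => rw [hLevel_zero]; simp [uSdef]
  | succ n ih =>
    have hlt : enumJ J n < enumJ J (n+1) := enum_lt hJ (Nat.lt_succ_self n)
    rw [hLevel_succ, ih]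
    show enumJ J n + (List.ofFn _).length + 1 = enumJ J (n+1)
    rw [List.length_ofFn]
    omega

lemma ofFn_getD {n : ℕ} (g : Fin n → Bool) {p : ℕ} (h : p < n) :
    (List.ofFn g).getD p false = g ⟨p, h⟩ := by
  rw [List.getD_eq_getElem _ _ (by simpa using h)]
  simp

lemma uS_prefix_val (y : ℕ → Bool) (hJ : J.Infinite) (i : ℕ → Bool) :
    ∀ n p, p ≤ hLevel (uSdef y J) n → p ∉ J →
      (silverPrefix (uSdef y J) i n).getD p false = y p := by
  intro n
  induction n with
  | zero =>
    intro p hp hpJ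
    rw [uS_hLevel y hJ 0] at hp
    have hne : p ≠ enumJ J 0 := fun h => hpJ (h ▸ enum_mem hJ 0)
    have hplt : p < enumJ J 0 := by omega
    show ((uSdef y J 0) ++ [i 0]).getD p false = y p
    rw [List.getD_append (uSdef y J 0) [i 0] false p (by simp [uSdef]; exact hplt)]
    show (List.ofFn (fun m : Fin (enumJ J 0) => y m)).getD p false = y p
    rw [ofFn_getD _ hplt]
  | succ n ih =>
    intro p hp hpJ
    by_cases hpn : p ≤ hLevel (uSdef y J) n
    · rw [silverPrefix_getD_stable _ i (Nat.le_succ n) hpn]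
      exact ih p hpn hpJ
    · push_neg at hpn
      rw [uS_hLevel y hJ (n+1)] at hp
      rw [uS_hLevel y hJ n] at hpn
      have hne : p ≠ enumJ J (n+1) := fun h => hpJ (h ▸ enum_mem hJ (n+1))
      have hplt : p < enumJ J (n+1) := by omega
      have hlen1 : (silverPrefix (uSdef y J) i n).length = enumJ J n + 1 := by
        rw [silverPrefix_length, uS_hLevel y hJ n]
      have hlen2 : (uSdef y J (n+1)).length = enumJ J (n+1) - enumJ J n - 1 := by
        simp [uSdef]
      show ((silverPrefix (uSdef y J) i n ++ uSdef y J (n+1)) ++ [i (n+1)]).getD p false = y p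
      rw [List.getD_append (silverPrefix (uSdef y J) i n ++ uSdef y J (n+1)) [i (n+1)]
        false p (by rw [List.length_append, hlen1, hlen2]; omega)]
      rw [List.getD_append_right (silverPrefix (uSdef y J) i n) (uSdef y J (n+1))
        false p (by rw [hlen1]; omega)]
      rw [hlen1]
      show (List.ofFn (fun m : Fin (enumJ J (n+1) - enumJ J n - 1) =>
        y (enumJ J n + 1 + ↑m))).getD (p - (enumJ J n + 1)) false = y p
      rw [ofFn_getD _ (by omega : p - (enumJ J n + 1) < enumJ J (n+1) - enumJ J n - 1)]
      show y (enumJ J n + 1 + (p - (enumJ J n + 1))) = y p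
      congr 1
      omega

lemma uS_base (y : ℕ → Bool) (hJ : J.Infinite) (i : ℕ → Bool) {p : ℕ} (hpJ : p ∉ J) :
    silverBranch (uSdef y J) i p = y p := by
  rw [silverBranch_eq_prefix _ i (self_le_hLevel (uSdef y J) p)]
  exact uS_prefix_val y hJ i p p (self_le_hLevel _ p) hpJ


end SilverProof
end
end SilverProofSection

theorem continuous_inj_or_const_on_silver (T : Set (List Bool)) (hT : IsSilver T)
    (f : (ℕ → Bool) → (ℕ → Bool)) (hf : Continuous f) :
    ∃ S : Set (List Bool), IsSilver S ∧ S ⊆ T ∧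
      (Set.InjOn f (branches S) ∨ ∃ c, ∀ a ∈ branches S, f a = c) := by
  classical
  obtain ⟨u, hu⟩ := hT
  have hIinf : (Set.range (hLevel u)).Infinite :=
    Set.infinite_range_of_injective (SilverProof.hLevel_strictMono u).injective
  have hbrT : branches T = SilverProof.cube (silverBranch u (fun _ => false))
      (Set.range (hLevel u)) := by
    rw [hu]
    exact SilverProof.branches_eq_cube u
  obtain ⟨y, J, hJI, hJinf, hsub, halt⟩ :=
    SilverProof.cube_main hf (silverBranch u (fun _ => false)) (Set.range (hLevel u)) hIinf
  have hrange : Set.range (hLevel (SilverProof.uSdef y J)) = J := by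
    have he : hLevel (SilverProof.uSdef y J) = SilverProof.enumJ J :=
      funext (SilverProof.uS_hLevel y hJinf)
    rw [he]
    exact SilverProof.enum_range hJinf
  have hbrS : branches {s : List Bool |
      ∃ i : ℕ → Bool, s = seqTake (silverBranch (SilverProof.uSdef y J) i) s.length}
      = SilverProof.cube y J := by
    rw [SilverProof.branches_eq_cube (SilverProof.uSdef y J), hrange]
    exact SilverProof.cube_congr (fun m hm => SilverProof.uS_base y hJinf (fun _ => false) hm)
  have hScube : ∀ i : ℕ → Bool, silverBranch (SilverProof.uSdef y J) i ∈
      SilverProof.cube y J := by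
    intro i
    rw [← hbrS]
    intro n
    exact ⟨i, by rw [SilverProof.seqTake_length]⟩
  refine ⟨{s : List Bool |
      ∃ i : ℕ → Bool, s = seqTake (silverBranch (SilverProof.uSdef y J) i) s.length},
    ⟨SilverProof.uSdef y J, rfl⟩, ?_, ?_⟩
  · intro s hs
    obtain ⟨i, hsi⟩ := hs
    have hb : silverBranch (SilverProof.uSdef y J) i ∈ branches T := by
      rw [hbrT]
      exact hsub (hScube i)
    rw [hsi]
    exact hb s.length
  · rw [hbrS]
    exact halt
end

section
/- If T is a Silver tree with stem s = u₀(T) (the longest string s ∈ T with T↾s = T) of length n, and σ = 0^n⌢1 ∈ 2^{n+1}, then σ ∔ T = T, while the induced map a ↦ σ ∔ a on [T] has no fixed points (σ ∔ a ≠ a for all a ∈ [T]). -/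
open List

/-! Every branch of a Silver tree passes through position `|u₀|` exactly at its first free bit
`i₀`, so flipping that bit of a branch yields the branch with `i₀` flipped. Hence `σ ∔ ·` maps
`T` into itself, and being an involution it maps `T` onto itself; on the other hand it changes
every sequence at position `|u₀|`. -/

lemma Function.Involutive.image_eq_of_mapsTo {α : Type*} {f : α → α} {s : Set α}
    (hf : Function.Involutive f) (hs : Set.MapsTo f s s) : f '' s = s :=
  hs.image_subset.antisymm fun x hx => ⟨f x, hs hx, hf x⟩

lemma shiftSeq_shiftSeq (σ : List Bool) (a : ℕ → Bool) : shiftSeq σ (shiftSeq σ a) = a := by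
  funext i
  unfold shiftSeq
  split_ifs <;> simp

lemma shiftStr_seqTake (σ : List Bool) (a : ℕ → Bool) (L : ℕ) :
    shiftStr σ (seqTake a L) = seqTake (shiftSeq σ a) L := by
  apply List.ext_getElem (by simp [shiftStr, seqTake])
  intro m _ _
  simp [shiftStr, seqTake, shiftSeq, List.getD_eq_getElem?_getD]

lemma seqTake_getD_length (v : List Bool) : seqTake (fun i => v.getD i false) v.length = v := by
  apply List.ext_getElem (by simp [seqTake])
  intro m _ _
  simp [seqTake, List.getD_eq_getElem?_getD]

lemma shiftStr_involutive (σ : List Bool) : Function.Involutive (shiftStr σ) := fun v => by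
  rw [shiftStr.eq_def σ v, shiftStr_seqTake, shiftSeq_shiftSeq, seqTake_getD_length]

lemma shiftSeq_replicate_false_append_true (n : ℕ) (a : ℕ → Bool) :
    shiftSeq (List.replicate n false ++ [true]) a = Function.update a n (!a n) := by
  funext m
  rcases lt_trichotomy m n with h | rfl | h
  · simp [shiftSeq, Function.update, h.ne, List.getD_eq_getElem?_getD,
      h, Nat.lt_succ_of_lt h]
  · simp [shiftSeq]
  · simp [shiftSeq, Function.update, h.ne', (Nat.succ_le_of_lt h).not_gt]

lemma length_stem_lt_length_silverPrefix (u : ℕ → List Bool) (i : ℕ → Bool) (m : ℕ) :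
    (u 0).length < (silverPrefix u i m).length := by
  induction m with
  | zero => simp [silverPrefix]
  | succ m ih => simp only [silverPrefix, List.length_append]; omega

lemma silverPrefix_update_zero (u : ℕ → List Bool) (i : ℕ → Bool) (b : Bool) (m : ℕ) :
    silverPrefix u (Function.update i 0 b) m = (silverPrefix u i m).set (u 0).length b := by
  induction m with
  | zero => simp [silverPrefix]
  | succ m ih =>
    rw [silverPrefix, silverPrefix, ih, List.append_assoc, List.append_assoc,
      List.set_append_left _ _ (length_stem_lt_length_silverPrefix u i m)]
    simp

lemma silverBranch_update_zero (u : ℕ → List Bool) (i : ℕ → Bool) (b : Bool) :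
    silverBranch u (Function.update i 0 b) = Function.update (silverBranch u i) (u 0).length b := by
  funext m
  unfold silverBranch
  rw [silverPrefix_update_zero]
  by_cases hm : m = (u 0).length
  · subst hm
    simp [List.getD_eq_getElem?_getD, length_stem_lt_length_silverPrefix]
  · simp [List.getD_eq_getElem?_getD, Function.update, hm, Ne.symm hm]

lemma silverBranch_length_stem (u : ℕ → List Bool) (i : ℕ → Bool) :
    silverBranch u i (u 0).length = i 0 := by
  simpa using congrFun (silverBranch_update_zero u i (i 0)) (u 0).length

lemma shiftSeq_stem_silverBranch (u : ℕ → List Bool) (i : ℕ → Bool) :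
    shiftSeq (List.replicate (u 0).length false ++ [true]) (silverBranch u i) =
      silverBranch u (Function.update i 0 (!i 0)) := by
  rw [shiftSeq_replicate_false_append_true, silverBranch_update_zero, silverBranch_length_stem]

lemma SilverTreeWith.mapsTo_shiftStr_stem {u : ℕ → List Bool} {T : Set (List Bool)}
    (hT : SilverTreeWith u T) :
    Set.MapsTo (shiftStr (List.replicate (u 0).length false ++ [true])) T T := by
  subst hT
  rintro v ⟨i, hv⟩
  refine ⟨Function.update i 0 (!i 0), ?_⟩
  rw [hv, shiftStr_seqTake, shiftSeq_stem_silverBranch]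
  simp [seqTake]

theorem silver_stem_shift (u : ℕ → List Bool) (T : Set (List Bool))
    (hT : SilverTreeWith u T) (s : List Bool) (hs : s = u 0)
    (σ : List Bool) (hσ : σ = List.replicate s.length false ++ [true]) :
    (shiftStr σ) '' T = T ∧ ∀ a ∈ branches T, shiftSeq σ a ≠ a := by
  subst hs hσ
  refine ⟨(shiftStr_involutive _).image_eq_of_mapsTo hT.mapsTo_shiftStr_stem, fun a _ h => ?_⟩
  have hflip := congrFun h (u 0).length
  simp [shiftSeq_replicate_false_append_true] at hflip
end
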